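/- arXiv:2304.01384 — 3 statements merged into one kernel-verified Lean document; each statement's English description precedes it below -/
import Mathlib

section
/- (Example 8.1, Donsker–Varadhan form) Let P° ∈ K(Δ°) be irreducible (for every x,y there is k ∈ ℕ with (P°)^k(x,y) > 0), let G(m) = P° for all m ∈ P(Δ°), and let A be the adjacency matrix with A(x,y) = 1 if and only if P°(x,y) > 0 (so A ∈ 𝒜 and A is irreducible). Let I be the rate function associated with A. Then for every m ∈ P(Δ°), I(m) = tilde I(m), where tilde I(m) = inf { R(γ ‖ m ⊗ P°) : γ ∈ P(Δ°×Δ°) with both marginals equal to m } and (m ⊗ P°)(x,y) = m(x) P°(x,y). -/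
open MeasureTheory Filter Set
open scoped ENNReal NNReal

noncomputable section

/-- The probability simplex `P(Δ°)`, identified with the standard simplex in `ℝ^d`. -/
def PD (d : ℕ) : Set (Fin d → ℝ) := stdSimplex ℝ (Fin d)

/-- ℓ¹ norm on `ℝ^d`. -/
def l1 {d : ℕ} (v : Fin d → ℝ) : ℝ := ∑ x, |v x|

/-- Transition probability kernels on `Δ°` (row-stochastic matrices). -/
def IsKernel {d : ℕ} (K : Matrix (Fin d) (Fin d) ℝ) : Prop :=
  ∀ x, (∀ y, 0 ≤ K x y) ∧ (∑ y, K x y) = 1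

/-- Adjacency matrix: entries are 0 or 1. -/
def IsAdjacency {d : ℕ} (A : Matrix (Fin d) (Fin d) ℝ) : Prop :=
  ∀ x y, A x y = 0 ∨ A x y = 1

/-- Irreducible adjacency matrix: for each `x, y` some positive power has positive `(x,y)` entry. -/
def IsIrreducibleAdj {d : ℕ} (A : Matrix (Fin d) (Fin d) ℝ) : Prop :=
  IsAdjacency A ∧ ∀ x y, ∃ k : ℕ, 0 < (A ^ (k + 1)) x y

/-- `A ∈ 𝒜`: `A` is an adjacency matrix and `A x y = 0` forces `G m x y = 0` on the simplex. -/
def MemA {d : ℕ} (G : (Fin d → ℝ) → Matrix (Fin d) (Fin d) ℝ)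
    (A : Matrix (Fin d) (Fin d) ℝ) : Prop :=
  IsAdjacency A ∧ ∀ x y, A x y = 0 → ∀ m ∈ PD d, G m x y = 0

open Classical in
/-- Relative entropy `R(ν ‖ μ)` of probability vectors on a finite type, valued in `ℝ≥0∞`. -/
def relEnt {S : Type*} [Fintype S] (ν μ : S → ℝ) : ℝ≥0∞ :=
  if ∀ s, μ s = 0 → ν s = 0 then ENNReal.ofReal (∑ s, ν s * Real.log (ν s / μ s)) else ⊤

/-- `η ∈ U(m)` together with the (unique) solution `M` of the equation (P3). -/
structure Admissible {d : ℕ} (A : Matrix (Fin d) (Fin d) ℝ)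
    (G : (Fin d → ℝ) → Matrix (Fin d) (Fin d) ℝ) (m : Fin d → ℝ)
    (η : ℝ → Fin d → Fin d → ℝ) (M : ℝ → Fin d → ℝ) : Prop where
  meas : ∀ x y, Measurable fun s => η s x y
  prob : ∀ s, 0 ≤ s → (∀ x y, 0 ≤ η s x y) ∧ (∑ x, ∑ y, η s x y) = 1
  p1 : ∀ x y, A x y = 0 → ∀ t, 0 ≤ t → (∫ s in (0:ℝ)..t, η s x y) = 0
  p2 : ∀ᵐ s ∂(volume.restrict (Ici (0:ℝ))), ∀ x, (∑ y, η s x y) = ∑ y, η s y x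
  contM : Continuous M
  sol : ∀ t, 0 ≤ t → ∀ x,
    M t x = m x - (∫ s in (0:ℝ)..t, ∑ y, η s x y) + ∫ s in (0:ℝ)..t, M s x
  memM : ∀ t, 0 ≤ t → M t ∈ PD d
  exT : ∃ T : ℝ → Fin d → Fin d → ℝ, Continuous T ∧
    (∀ s t, 0 ≤ s → 0 ≤ t → (∑ x, ∑ y, |T t x y - T s x y|) ≤ 2 * |t - s|) ∧
    ∀ t, 0 ≤ t →
      (∀ x y, 0 ≤ T t x y) ∧ (∀ x, (∑ y, T t x y) = M t x) ∧
      (∀ y, (∑ x, T t x y) = M t y) ∧ (∀ x y, A x y = 0 → T t x y = 0)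

/-- The discounted relative-entropy cost of a control `η` with associated trajectory `M`. -/
def cost {d : ℕ} (G : (Fin d → ℝ) → Matrix (Fin d) (Fin d) ℝ)
    (η : ℝ → Fin d → Fin d → ℝ) (M : ℝ → Fin d → ℝ) : ℝ≥0∞ :=
  ∫⁻ s in Ici (0:ℝ), ENNReal.ofReal (Real.exp (-s)) *
    relEnt (fun xy : Fin d × Fin d => η s xy.1 xy.2)
      (fun xy : Fin d × Fin d => (∑ y, η s xy.1 y) * G (M s) xy.1 xy.2)

/-- The rate function `I` associated with the adjacency matrix `A`. -/
def rateI {d : ℕ} (A : Matrix (Fin d) (Fin d) ℝ)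
    (G : (Fin d → ℝ) → Matrix (Fin d) (Fin d) ℝ) (m : Fin d → ℝ) : ℝ≥0∞ :=
  ⨅ (η : ℝ → Fin d → Fin d → ℝ) (M : ℝ → Fin d → ℝ) (_ : Admissible A G m η M),
    cost G η M

/-- Extended-real logarithm of an extended nonnegative real. -/
def elog (x : ℝ≥0∞) : EReal :=
  if x = 0 then ⊥ else if x = ⊤ then ⊤ else ((Real.log x.toReal : ℝ) : EReal)

/-- Assumption L (Lipschitz continuity), together with the standing requirement that
`G` maps the simplex into transition kernels. -/
def AssumptionL {d : ℕ} (G : (Fin d → ℝ) → Matrix (Fin d) (Fin d) ℝ) : Prop :=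
  (∀ m ∈ PD d, IsKernel (G m)) ∧
  ∃ LG : ℝ, 0 < LG ∧ ∀ m ∈ PD d, ∀ m' ∈ PD d,
    (∑ x, ∑ y, |G m x y - G m' x y|) ≤ LG * l1 (fun x => m x - m' x)

/-- `tilde I(m) = inf { R(γ ‖ m ⊗ G(m)) : γ has both marginals equal to m }`. -/
def tildeI {d : ℕ} (G : (Fin d → ℝ) → Matrix (Fin d) (Fin d) ℝ) (m : Fin d → ℝ) : ℝ≥0∞ :=
  ⨅ (γ : Fin d → Fin d → ℝ)
    (_ : (∀ x y, 0 ≤ γ x y) ∧ (∀ x, (∑ y, γ x y) = m x) ∧ (∀ y, (∑ x, γ x y) = m y)),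
    relEnt (fun xy : Fin d × Fin d => γ xy.1 xy.2)
      (fun xy : Fin d × Fin d => m xy.1 * G m xy.1 xy.2)

/-!
A coupling `γ` of `m` is admissible as the constant control `η ≡ γ` with `M ≡ m`, and its
discounted cost is exactly `R(γ ‖ m ⊗ P°)`; hence `I ≤ tilde I`. Conversely, for any admissible
control `η` the discounted occupation measure `γ = ∫₀^∞ e^{-s} η(s) ds` is a coupling of `m`: the
equation for `M` is `M' = M - η₍₁₎`, `M 0 = m`, which forces `∫₀^∞ e^{-s} η₍₁₎(s) ds = m`, and
(P2) identifies the two marginals. Since `G` is constant, the cost of `η` is a discounted average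
of `R(η(s) ‖ η₍₁₎(s) ⊗ P°)`, which by joint convexity of relative entropy (Jensen) dominates
`R(γ ‖ m ⊗ P°)`; hence `tilde I ≤ I`.
-/

open Real
open scoped Topology

open Classical in
/-- Generalized Kullback–Leibler divergence of masses `p, q ≥ 0`: the correction `- p + q` makes
it nonnegative, so that `relEnt` of equal-mass vectors splits into a sum of these in `ℝ≥0∞`. -/
def genKL (p q : ℝ) : ℝ≥0∞ :=
  if 0 < p ∧ q ≤ 0 then ⊤ else ENNReal.ofReal (p * log (p / q) - p + q)

lemma genKL_eq_ofReal {p q : ℝ} (hq : 0 < q) :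
    genKL p q = ENNReal.ofReal (p * log (p / q) - p + q) :=
  if_neg fun h => h.2.not_gt hq

lemma genKL_zero_left (q : ℝ) : genKL 0 q = ENNReal.ofReal q := by
  simp [genKL]

lemma genKL_zero_right {p : ℝ} (hp : 0 < p) : genKL p 0 = ⊤ :=
  if_pos ⟨hp, le_rfl⟩

/-- Young's inequality for the convex conjugate pair `p log p - p` and `exp`. -/
lemma ofReal_le_genKL {p q : ℝ} (hp : 0 ≤ p) (hq : 0 ≤ q) (t : ℝ) :
    ENNReal.ofReal (p * t - q * (exp t - 1)) ≤ genKL p q := by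
  rcases hp.eq_or_lt with rfl | hp
  · rw [genKL_zero_left]
    exact ENNReal.ofReal_le_ofReal (by nlinarith [exp_pos t])
  rcases hq.eq_or_lt with rfl | hq
  · simp [genKL_zero_right hp]
  rw [genKL_eq_ofReal hq]
  refine ENNReal.ofReal_le_ofReal ?_
  have h := add_one_le_exp (t - log (p / q))
  rw [exp_sub, exp_log (div_pos hp hq), div_div_eq_mul_div] at h
  have h' : (t - log (p / q) + 1) * p ≤ exp t * q := by
    rwa [le_div_iff₀ hp] at h
  nlinarith

lemma genKL_eq_iSup {p q : ℝ} (hp : 0 ≤ p) (hq : 0 ≤ q) :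
    genKL p q = ⨆ t : ℝ, ENNReal.ofReal (p * t - q * (exp t - 1)) := by
  refine le_antisymm ?_ (iSup_le (ofReal_le_genKL hp hq))
  rcases hp.eq_or_lt with rfl | hp
  · rw [genKL_zero_left]
    have hlim : Tendsto (fun t => ENNReal.ofReal (0 * t - q * (exp t - 1))) atBot
        (𝓝 (ENNReal.ofReal q)) := by
      refine (ENNReal.continuous_ofReal.tendsto _).comp ?_
      simpa using ((tendsto_exp_atBot.sub_const 1).const_mul q).neg
    exact le_of_tendsto' hlim fun t => le_iSup (fun t => ENNReal.ofReal (0 * t - q * (exp t - 1))) t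
  rcases hq.eq_or_lt with rfl | hq
  · rw [genKL_zero_right hp]
    refine (ENNReal.eq_top_of_forall_nnreal_le fun r => le_iSup_of_le (r / p) ?_).ge
    simp [mul_div_cancel₀ _ hp.ne']
  · refine le_iSup_of_le (log (p / q)) (le_of_eq ?_)
    rw [genKL_eq_ofReal hq, exp_log (div_pos hp hq), mul_sub, mul_div_cancel₀ _ hq.ne']
    ring_nf

lemma mul_log_div_sub_add_nonneg {p q : ℝ} (hp : 0 ≤ p) (hq : 0 ≤ q) (hpq : q = 0 → p = 0) :
    0 ≤ p * log (p / q) - p + q := by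
  rcases hp.eq_or_lt with rfl | hp
  · simpa using hq
  have hq : 0 < q := hq.lt_of_ne fun h => hp.ne' (hpq h.symm)
  have h := one_sub_inv_le_log_of_pos (div_pos hp hq)
  rw [inv_div, ← sub_nonneg] at h
  have : p * (log (p / q) - (1 - q / p)) = p * log (p / q) - p + q := by field_simp; ring
  nlinarith [mul_nonneg hp.le h]

lemma relEnt_eq_sum_genKL {S : Type*} [Fintype S] {ν μ : S → ℝ}
    (hν : ∀ s, 0 ≤ ν s) (hμ : ∀ s, 0 ≤ μ s) (hsum : ∑ s, ν s = ∑ s, μ s) :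
    relEnt ν μ = ∑ s, genKL (ν s) (μ s) := by
  classical
  unfold relEnt
  split_ifs with hac
  · have hterm : ∀ s, genKL (ν s) (μ s) = ENNReal.ofReal (ν s * log (ν s / μ s) - ν s + μ s) :=
      fun s => if_neg fun h => h.1.ne' (hac s (h.2.antisymm (hμ s)))
    have hreal : ∑ s, ν s * log (ν s / μ s) = ∑ s, (ν s * log (ν s / μ s) - ν s + μ s) := by
      rw [Finset.sum_add_distrib, Finset.sum_sub_distrib, hsum, sub_add_cancel]
    rw [hreal, ENNReal.ofReal_sum_of_nonneg
      fun s _ => mul_log_div_sub_add_nonneg (hν s) (hμ s) (hac s)]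
    exact Finset.sum_congr rfl fun s _ => (hterm s).symm
  · push Not at hac
    obtain ⟨s, hμs, hνs⟩ := hac
    rw [eq_comm, ENNReal.sum_eq_top]
    refine ⟨s, Finset.mem_univ s, ?_⟩
    rw [hμs]
    exact genKL_zero_right ((hν s).lt_of_ne' hνs)

lemma Measurable.genKL {α : Type*} [MeasurableSpace α] {f g : α → ℝ} (hf : Measurable f)
    (hg : Measurable g) : Measurable fun a => genKL (f a) (g a) :=
  Measurable.ite
    ((measurableSet_lt measurable_const hf).inter (measurableSet_le hg measurable_const))
    measurable_const (by fun_prop)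

lemma ofReal_integral_le_lintegral_ofReal {α : Type*} [MeasurableSpace α] {μ : Measure α}
    {f : α → ℝ} (hf : Integrable f μ) :
    ENNReal.ofReal (∫ a, f a ∂μ) ≤ ∫⁻ a, ENNReal.ofReal (f a) ∂μ := by
  refine (ENNReal.ofReal_le_ofReal ?_).trans ENNReal.ofReal_toReal_le
  rw [integral_eq_lintegral_pos_part_sub_lintegral_neg_part hf]
  exact sub_le_self _ ENNReal.toReal_nonneg

/-- Jensen's inequality, obtained from `genKL_eq_iSup`: a supremum of linear functions of
`(p, q)` commutes with the weighted integral in one direction. -/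
lemma genKL_integral_le {α : Type*} [MeasurableSpace α] {μ : Measure α} {w p q : α → ℝ}
    (hw : 0 ≤ᵐ[μ] w) (hp : 0 ≤ᵐ[μ] p) (hq : 0 ≤ᵐ[μ] q)
    (hwp : Integrable (fun a => w a * p a) μ) (hwq : Integrable (fun a => w a * q a) μ) :
    genKL (∫ a, w a * p a ∂μ) (∫ a, w a * q a ∂μ) ≤
      ∫⁻ a, ENNReal.ofReal (w a) * genKL (p a) (q a) ∂μ := by
  have hwp0 : 0 ≤ ∫ a, w a * p a ∂μ :=
    integral_nonneg_of_ae (by filter_upwards [hw, hp] with a ha hb using mul_nonneg ha hb)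
  have hwq0 : 0 ≤ ∫ a, w a * q a ∂μ :=
    integral_nonneg_of_ae (by filter_upwards [hw, hq] with a ha hb using mul_nonneg ha hb)
  rw [genKL_eq_iSup hwp0 hwq0]
  refine iSup_le fun t => ?_
  have hfun : (fun a => w a * (p a * t - q a * (exp t - 1))) =
      fun a => w a * p a * t - w a * q a * (exp t - 1) := by
    ext a; ring
  have hint : Integrable (fun a => w a * (p a * t - q a * (exp t - 1))) μ := by
    rw [hfun]; exact (hwp.mul_const t).sub (hwq.mul_const _)
  have hlin : (∫ a, w a * p a ∂μ) * t - (∫ a, w a * q a ∂μ) * (exp t - 1) =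
      ∫ a, w a * (p a * t - q a * (exp t - 1)) ∂μ := by
    rw [hfun, integral_sub (hwp.mul_const t) (hwq.mul_const _), integral_mul_const,
      integral_mul_const]
  rw [hlin]
  refine (ofReal_integral_le_lintegral_ofReal hint).trans (lintegral_mono_ae ?_)
  filter_upwards [hw, hp, hq] with a hwa hpa hqa
  rw [ENNReal.ofReal_mul hwa]
  exact mul_le_mul_right (ofReal_le_genKL hpa hqa t) _

/-- Variation of constants for `g' = g - a`, `g 0 = c`, written in integral form. -/
lemma intervalIntegral_exp_neg_mul_eq {a g : ℝ → ℝ} {c T : ℝ} (hT : 0 ≤ T)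
    (ha : IntervalIntegrable a volume 0 T) (hg : Continuous g)
    (hsol : ∀ t ∈ Icc 0 T, g t = c - (∫ s in 0..t, a s) + ∫ s in 0..t, g s) :
    ∫ s in 0..T, exp (-s) * a s = c - exp (-T) * g T := by
  set F : ℝ → ℝ := fun t => ∫ s in 0..t, (g s - a s)
  have hga : IntervalIntegrable (fun s => g s - a s) volume 0 T :=
    (hg.intervalIntegrable 0 T).sub ha
  have hgF : ∀ t ∈ Icc 0 T, g t = c + F t := fun t ht => by
    have hat : IntervalIntegrable a volume 0 t :=
      ha.mono_set (uIcc_subset_uIcc_left (by rwa [uIcc_of_le hT]))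
    have hF : F t = (∫ s in 0..t, g s) - ∫ s in 0..t, a s :=
      intervalIntegral.integral_sub (hg.intervalIntegrable 0 t) hat
    rw [hsol t ht, hF]
    ring
  set h : ℝ → ℝ := fun t => exp (-t) * (c + F t)
  have hac : AbsolutelyContinuousOnInterval h 0 T :=
    (((contDiff_id.neg.exp).contDiffOn).absolutelyContinuousOnInterval).fun_mul
      ((contDiffOn_const.absolutelyContinuousOnInterval).fun_add
        (hga.absolutelyContinuousOnInterval_intervalIntegral left_mem_uIcc))
  have hderiv : ∀ᵐ x, x ∈ uIoc 0 T → deriv h x = -(exp (-x) * a x) := by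
    filter_upwards [hga.ae_hasDerivAt_integral] with x hx hxT
    have hxT' : x ∈ Icc 0 T := by rw [← uIcc_of_le hT]; exact uIoc_subset_uIcc hxT
    have hF := hx (uIoc_subset_uIcc hxT) 0 left_mem_uIcc
    have hh : HasDerivAt h (-exp (-x) * (c + F x) + exp (-x) * (g x - a x)) x :=
      ((hasDerivAt_neg x).exp.mul (hF.const_add c)).congr_deriv (by ring)
    rw [hh.deriv, ← hgF x hxT']
    ring
  have hftc := hac.integral_deriv_eq_sub
  rw [intervalIntegral.integral_congr_ae hderiv, intervalIntegral.integral_neg] at hftc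
  simp only [h, F, intervalIntegral.integral_same, neg_zero, exp_zero, add_zero, one_mul] at hftc
  rw [hgF T (right_mem_Icc.2 hT)]
  linarith

lemma integrableOn_exp_neg_Ici : IntegrableOn (fun s => exp (-s)) (Ici 0) :=
  (integrableOn_Ici_iff_integrableOn_Ioi (by simp)).2 (integrableOn_exp_neg_Ioi 0)

lemma integrableOn_exp_neg_mul {a : ℝ → ℝ} {C : ℝ} (ha : Measurable a)
    (ha_bdd : ∀ s, 0 ≤ s → |a s| ≤ C) :
    IntegrableOn (fun s => exp (-s) * a s) (Ici 0) := by
  refine Integrable.mono' (integrableOn_exp_neg_Ici.mul_const C) (by fun_prop) ?_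
  filter_upwards [ae_restrict_mem measurableSet_Ici] with s hs
  rw [norm_mul, Real.norm_of_nonneg (exp_pos _).le]
  exact mul_le_mul_of_nonneg_left (ha_bdd s hs) (exp_pos _).le

lemma lintegral_exp_neg_Ici : ∫⁻ s in Ici (0 : ℝ), ENNReal.ofReal (exp (-s)) = 1 := by
  rw [← ofReal_integral_eq_lintegral_ofReal integrableOn_exp_neg_Ici
    (ae_of_all _ fun s => (exp_pos _).le), integral_Ici_eq_integral_Ioi,
    integral_exp_neg_Ioi_zero, ENNReal.ofReal_one]

lemma setIntegral_exp_neg_mul_eq {a g : ℝ → ℝ} {c C : ℝ} (ha : Measurable a)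
    (ha_bdd : ∀ s, 0 ≤ s → |a s| ≤ C) (hg : Continuous g) (hg_bdd : ∀ s, 0 ≤ s → |g s| ≤ C)
    (hsol : ∀ t, 0 ≤ t → g t = c - (∫ s in 0..t, a s) + ∫ s in 0..t, g s) :
    ∫ s in Ici 0, exp (-s) * a s = c := by
  have hlim := intervalIntegral_tendsto_integral_Ioi 0
    ((integrableOn_exp_neg_mul ha ha_bdd).mono_set Ioi_subset_Ici_self) tendsto_id
  have hfin : (fun T => ∫ s in 0..T, exp (-s) * a s) =ᶠ[atTop] fun T => c - exp (-T) * g T := by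
    filter_upwards [eventually_ge_atTop 0] with T hT
    refine intervalIntegral_exp_neg_mul_eq hT ?_ hg fun t ht => hsol t ht.1
    refine (intervalIntegrable_const (c := C)).mono_fun' ha.aestronglyMeasurable ?_
    rw [uIoc_of_le hT]
    filter_upwards [ae_restrict_mem measurableSet_Ioc] with s hs
    exact ha_bdd s hs.1.le
  have hdecay : Tendsto (fun T => exp (-T) * g T) atTop (𝓝 0) := by
    refine squeeze_zero_norm' ?_ (by simpa using tendsto_exp_neg_atTop_nhds_zero.mul_const C)
    filter_upwards [eventually_ge_atTop 0] with T hT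
    rw [norm_mul, Real.norm_of_nonneg (exp_pos _).le]
    exact mul_le_mul_of_nonneg_left (hg_bdd T hT) (exp_pos _).le
  rw [integral_Ici_eq_integral_Ioi]
  exact tendsto_nhds_unique (hlim.congr' hfin) (by simpa using hdecay.const_sub c)

section

variable {d : ℕ}

def IsCoupling (m : Fin d → ℝ) (γ : Fin d → Fin d → ℝ) : Prop :=
  (∀ x y, 0 ≤ γ x y) ∧ (∀ x, (∑ y, γ x y) = m x) ∧ (∀ y, (∑ x, γ x y) = m y)

lemma IsKernel.sum_mul {P : Matrix (Fin d) (Fin d) ℝ} (hP : IsKernel P) (f : Fin d → ℝ) :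
    ∑ xy : Fin d × Fin d, f xy.1 * P xy.1 xy.2 = ∑ x, f x := by
  simp [Fintype.sum_prod_type, ← Finset.mul_sum, (hP _).2]

lemma admissible_const {A : Matrix (Fin d) (Fin d) ℝ} {G : (Fin d → ℝ) → Matrix (Fin d) (Fin d) ℝ}
    {m : Fin d → ℝ} (hm : m ∈ PD d) {γ : Fin d → Fin d → ℝ} (hγ : IsCoupling m γ)
    (hγA : ∀ x y, A x y = 0 → γ x y = 0) :
    Admissible A G m (fun _ => γ) (fun _ => m) := by
  obtain ⟨hγ0, hrow, hcol⟩ := hγ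
  refine ⟨fun _ _ => measurable_const, fun _ _ => ⟨hγ0, ?_⟩, fun x y h _ _ => by simp [hγA x y h],
    ae_of_all _ fun _ x => by rw [hrow, hcol], continuous_const, fun _ _ x => ?_, fun _ _ => hm,
    ⟨fun _ => γ, continuous_const, fun _ _ _ _ => by simp, fun _ _ => ⟨hγ0, hrow, hcol, hγA⟩⟩⟩
  · simpa [hrow] using hm.2
  · simp [hrow]

lemma cost_const (G : (Fin d → ℝ) → Matrix (Fin d) (Fin d) ℝ) {m : Fin d → ℝ}
    {γ : Fin d → Fin d → ℝ} (hrow : ∀ x, (∑ y, γ x y) = m x) :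
    cost G (fun _ => γ) (fun _ => m) =
      relEnt (fun xy : Fin d × Fin d => γ xy.1 xy.2)
        (fun xy : Fin d × Fin d => m xy.1 * G m xy.1 xy.2) := by
  simp only [cost, hrow]
  rw [lintegral_mul_const _ (by fun_prop), lintegral_exp_neg_Ici, one_mul]

lemma rateI_le_tildeI {A : Matrix (Fin d) (Fin d) ℝ}
    {G : (Fin d → ℝ) → Matrix (Fin d) (Fin d) ℝ} {m : Fin d → ℝ} (hm : m ∈ PD d)
    (hGA : ∀ x y, A x y = 0 → G m x y = 0) : rateI A G m ≤ tildeI G m := by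
  refine le_iInf₂ fun γ hγ => ?_
  by_cases hac : ∀ xy : Fin d × Fin d, m xy.1 * G m xy.1 xy.2 = 0 → γ xy.1 xy.2 = 0
  · have hγA : ∀ x y, A x y = 0 → γ x y = 0 := fun x y h => hac (x, y) (by simp [hGA x y h])
    rw [← cost_const G hγ.2.1]
    exact iInf₂_le_of_le _ _ (iInf_le _ (admissible_const hm hγ hγA))
  · rw [relEnt, if_neg hac]
    exact le_top

def discountedOccupation (η : ℝ → Fin d → Fin d → ℝ) (x y : Fin d) : ℝ :=
  ∫ s in Ici 0, exp (-s) * η s x y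

namespace Admissible

variable {A : Matrix (Fin d) (Fin d) ℝ} {G : (Fin d → ℝ) → Matrix (Fin d) (Fin d) ℝ}
  {m : Fin d → ℝ} {η : ℝ → Fin d → Fin d → ℝ} {M : ℝ → Fin d → ℝ}

lemma rowSum_mem_stdSimplex (h : Admissible A G m η M) {s : ℝ} (hs : 0 ≤ s) :
    (fun x => ∑ y, η s x y) ∈ stdSimplex ℝ (Fin d) :=
  ⟨fun x => Finset.sum_nonneg fun y _ => (h.prob s hs).1 x y, (h.prob s hs).2⟩

lemma mem_Icc (h : Admissible A G m η M) {s : ℝ} (hs : 0 ≤ s) (x y : Fin d) :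
    η s x y ∈ Icc 0 1 :=
  ⟨(h.prob s hs).1 x y, (Finset.single_le_sum (fun y _ => (h.prob s hs).1 x y)
    (Finset.mem_univ y)).trans (mem_Icc_of_mem_stdSimplex (h.rowSum_mem_stdSimplex hs) x).2⟩

lemma integrableOn_exp_neg_mul (h : Admissible A G m η M) (x y : Fin d) :
    IntegrableOn (fun s => exp (-s) * η s x y) (Ici 0) :=
  _root_.integrableOn_exp_neg_mul (C := 1) (h.meas x y) fun _ hs =>
    (abs_of_nonneg (h.mem_Icc hs x y).1).trans_le (h.mem_Icc hs x y).2

lemma setIntegral_exp_neg_mul_rowSum (h : Admissible A G m η M) (x : Fin d) :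
    ∫ s in Ici 0, exp (-s) * ∑ y, η s x y = m x := by
  refine setIntegral_exp_neg_mul_eq (C := 1) (Finset.measurable_sum _ fun y _ => h.meas x y)
    (fun s hs => ?_) ((continuous_apply x).comp h.contM) (fun t ht => ?_)
    fun t ht => h.sol t ht x
  · have hx := mem_Icc_of_mem_stdSimplex (h.rowSum_mem_stdSimplex hs) x
    exact (abs_of_nonneg hx.1).trans_le hx.2
  · have hx := mem_Icc_of_mem_stdSimplex (h.memM t ht) x
    exact (abs_of_nonneg hx.1).trans_le hx.2

lemma isCoupling_discountedOccupation (h : Admissible A G m η M) :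
    IsCoupling m (discountedOccupation η) := by
  have hrow : ∀ x, ∑ y, discountedOccupation η x y = m x := fun x => by
    simp_rw [← h.setIntegral_exp_neg_mul_rowSum x, Finset.mul_sum]
    exact (integral_finsetSum _ fun y _ => h.integrableOn_exp_neg_mul x y).symm
  refine ⟨fun x y => setIntegral_nonneg measurableSet_Ici fun s hs =>
    mul_nonneg (exp_pos _).le (h.mem_Icc hs x y).1, hrow, fun y => ?_⟩
  rw [← hrow y]
  simp only [discountedOccupation]
  rw [← integral_finsetSum _ fun x _ => h.integrableOn_exp_neg_mul x y,
    ← integral_finsetSum _ fun x _ => h.integrableOn_exp_neg_mul y x]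
  refine integral_congr_ae ?_
  filter_upwards [h.p2] with s hs
  simp only [← Finset.mul_sum, hs y]

lemma cost_eq_lintegral_sum_genKL {P : Matrix (Fin d) (Fin d) ℝ} (hP : IsKernel P)
    (h : Admissible A (fun _ => P) m η M) :
    cost (fun _ => P) η M = ∫⁻ s in Ici 0, ∑ xy : Fin d × Fin d,
      ENNReal.ofReal (exp (-s)) * genKL (η s xy.1 xy.2) ((∑ y, η s xy.1 y) * P xy.1 xy.2) := by
  refine setLIntegral_congr_fun measurableSet_Ici fun s hs => ?_
  rw [relEnt_eq_sum_genKL (fun xy => (h.mem_Icc hs _ _).1)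
    (fun xy => mul_nonneg ((h.rowSum_mem_stdSimplex hs).1 _) ((hP _).1 _)) ?_, Finset.mul_sum]
  rw [hP.sum_mul (fun x => ∑ y, η s x y), Fintype.sum_prod_type]

lemma relEnt_discountedOccupation_le_cost {P : Matrix (Fin d) (Fin d) ℝ} (hP : IsKernel P)
    (h : Admissible A (fun _ => P) m η M) :
    relEnt (fun xy : Fin d × Fin d => discountedOccupation η xy.1 xy.2)
      (fun xy : Fin d × Fin d => m xy.1 * P xy.1 xy.2) ≤ cost (fun _ => P) η M := by
  obtain ⟨hγ0, hrow, -⟩ := h.isCoupling_discountedOccupation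
  have hq_int : ∀ x y, IntegrableOn (fun s => exp (-s) * ((∑ y', η s x y') * P x y)) (Ici 0) := by
    intro x y
    simp_rw [← mul_assoc, Finset.mul_sum]
    exact (integrable_finsetSum _ fun y' _ => h.integrableOn_exp_neg_mul x y').mul_const _
  have hq : ∀ x y, m x * P x y = ∫ s in Ici 0, exp (-s) * ((∑ y', η s x y') * P x y) := by
    intro x y
    simp_rw [← h.setIntegral_exp_neg_mul_rowSum x, ← integral_mul_const, mul_assoc]
  have hmass : ∑ xy : Fin d × Fin d, discountedOccupation η xy.1 xy.2 =
      ∑ xy : Fin d × Fin d, m xy.1 * P xy.1 xy.2 := by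
    rw [hP.sum_mul, Fintype.sum_prod_type]
    exact Finset.sum_congr rfl fun x _ => hrow x
  have hm : ∀ x, 0 ≤ m x := fun x => hrow x ▸ Finset.sum_nonneg fun y _ => hγ0 x y
  rw [relEnt_eq_sum_genKL (fun xy => hγ0 _ _) (fun xy => mul_nonneg (hm _) ((hP _).1 _)) hmass,
    h.cost_eq_lintegral_sum_genKL hP, lintegral_finsetSum _ fun xy _ => ?_]
  · refine Finset.sum_le_sum fun xy _ => ?_
    rw [hq]
    refine genKL_integral_le (ae_of_all _ fun s => (exp_pos _).le) ?_ ?_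
      (h.integrableOn_exp_neg_mul _ _) (hq_int _ _) <;>
    filter_upwards [ae_restrict_mem measurableSet_Ici] with s hs
    · exact (h.mem_Icc hs _ _).1
    · exact mul_nonneg ((h.rowSum_mem_stdSimplex hs).1 _) ((hP _).1 _)
  · exact (by fun_prop : Measurable fun s => ENNReal.ofReal (exp (-s))).mul
      ((h.meas _ _).genKL ((Finset.measurable_sum _ fun y _ => h.meas _ y).mul_const _))

end Admissible

lemma tildeI_le_rateI {A P : Matrix (Fin d) (Fin d) ℝ} (hP : IsKernel P) (m : Fin d → ℝ) :
    tildeI (fun _ => P) m ≤ rateI A (fun _ => P) m :=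
  le_iInf₂ fun _ _ => le_iInf fun h =>
    (iInf₂_le _ h.isCoupling_discountedOccupation).trans (h.relEnt_discountedOccupation_le_cost hP)

end

theorem rateI_eq_donsker_varadhan_general {d : ℕ}
    (P₀ : Matrix (Fin d) (Fin d) ℝ) (hP : IsKernel P₀)
    (A : Matrix (Fin d) (Fin d) ℝ)
    (hA : ∀ x y, A x y = if 0 < P₀ x y then 1 else 0)
    (m : Fin d → ℝ) (hm : m ∈ PD d) :
    rateI A (fun _ => P₀) m = tildeI (fun _ => P₀) m :=
  (rateI_le_tildeI hm fun x y hxy => by simpa [hA x y, (hP x).1 y |>.lt_iff_ne'] using hxy).antisymm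
    (tildeI_le_rateI hP m)

/-- **(Example 8.1, Donsker–Varadhan form.)** If `G(m) = P°` for an irreducible transition
kernel `P°`, and `A` is the adjacency matrix of `P°`, then the rate function associated with
`A` equals the classical Donsker–Varadhan rate function `tilde I`. -/
theorem rateI_eq_donsker_varadhan {d : ℕ} [NeZero d]
    (P₀ : Matrix (Fin d) (Fin d) ℝ) (hP : IsKernel P₀)
    (hirr : ∀ x y, ∃ k : ℕ, 0 < (P₀ ^ (k + 1)) x y)
    (A : Matrix (Fin d) (Fin d) ℝ)
    (hA : ∀ x y, A x y = if 0 < P₀ x y then 1 else 0)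
    (m : Fin d → ℝ) (hm : m ∈ PD d) :
    rateI A (fun _ => P₀) m = tildeI (fun _ => P₀) m :=
  rateI_eq_donsker_varadhan_general P₀ hP A hA m hm

end
end

section
/- (Appendix Lemma A.2) Suppose G satisfies Assumption L and there exist K ∈ ℕ such that for all m₁,…,m_K ∈ P(Δ°) and all x,y ∈ Δ°, Σ_{j=1}^K (G(m₁)·G(m₂)⋯G(m_j))(x,y) > 0 (matrix products). Then for every x ∈ Δ°, P(∃ n ∈ ℕ : L^n(x) > 0) = 1. -/
/-!
Condition on `F_N`. On an atom of `F_N` the empirical measure `L^{N+1} = m` and the state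
`X_N = z` are frozen, and during the next `j ≤ K` steps the empirical measure moves by at most
`2j/(N+1)` in `ℓ¹`. By Assumption L and the `ℓ¹`-contractivity of stochastic matrices, the law of
`X_{N+j}` on the atom is then within `O(K²/N)` of the row `z` of `G(m)^j`. Compactness of the
simplex turns the positivity hypothesis, used for constant sequences, into a uniform bound
`ε ≤ ∑_{j ≤ K} G(m)^j(z, x)`. Hence, once `N` is large, a path that has avoided `x` up to time
`N` hits it within `K` more steps with conditional probability at least `ε / 2K`, so the
probability of never visiting `x` decays geometrically along `N₀ + nK` and vanishes.
-/

open MeasureTheory Filter Set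
open scoped ENNReal NNReal

noncomputable section

/-- The filtration `F_n = σ(X₀, …, X_n)`. -/
def chainFilt {d : ℕ} {Ω : Type*} (X : ℕ → Ω → Fin d) (n : ℕ) : MeasurableSpace Ω :=
  ⨆ i : Fin (n + 1), MeasurableSpace.comap (X i) ⊤

/-- The self-interacting Markov chain driven by `G`, started at `x₀`, together with its
empirical measures `L^{n+1} = (1/(n+1)) ∑_{i=0}^n δ_{X_i}` and the conditional-law property
`P(X_{n+1} = y | F_n) = G(L^{n+1})(X_n, y)` (stated via set integrals over `F_n`-sets). -/
structure IsSelfInteractingChain {d : ℕ} {Ω : Type*} [MeasurableSpace Ω] (P : Measure Ω)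
    (G : (Fin d → ℝ) → Matrix (Fin d) (Fin d) ℝ) (x₀ : Fin d)
    (X : ℕ → Ω → Fin d) (L : ℕ → Ω → Fin d → ℝ) : Prop where
  measX : ∀ n, Measurable (X n)
  init : ∀ ω, X 0 ω = x₀
  emp : ∀ n ω x, L (n + 1) ω x =
    (∑ i ∈ Finset.range (n + 1), if X i ω = x then (1:ℝ) else 0) / (n + 1)
  cond : ∀ n y (s : Set Ω), MeasurableSet[chainFilt X n] s →
    (∫ ω in s, (if X (n + 1) ω = y then (1:ℝ) else 0) ∂P) =
      ∫ ω in s, G (L (n + 1) ω) (X n ω) y ∂P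

open Topology

section Simplex

variable {d : ℕ}

lemma abs_le_l1 (v : Fin d → ℝ) (x : Fin d) : |v x| ≤ l1 v :=
  Finset.single_le_sum (f := fun y => |v y|) (fun _ _ => abs_nonneg _) (Finset.mem_univ x)

lemma l1_sub_le_add (u v w : Fin d → ℝ) : l1 (u - w) ≤ l1 (u - v) + l1 (v - w) := by
  unfold l1
  rw [← Finset.sum_add_distrib]
  exact Finset.sum_le_sum fun x _ => abs_sub_le (u x) (v x) (w x)

lemma l1_sub_le_two {p q : Fin d → ℝ} (hp : p ∈ PD d) (hq : q ∈ PD d) : l1 (p - q) ≤ 2 := by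
  calc l1 (p - q) ≤ ∑ x, (p x + q x) := Finset.sum_le_sum fun x _ => by
        simpa only [Pi.sub_apply, abs_of_nonneg (hp.1 x), abs_of_nonneg (hq.1 x)] using
          abs_sub (p x) (q x)
    _ = 2 := by rw [Finset.sum_add_distrib, hp.2, hq.2]; norm_num

open Matrix in
lemma IsKernel.l1_vecMul_le {A : Matrix (Fin d) (Fin d) ℝ} (hA : IsKernel A) (v : Fin d → ℝ) :
    l1 (v ᵥ* A) ≤ l1 v := by
  calc l1 (v ᵥ* A) = ∑ y, |∑ x, v x * A x y| := rfl
    _ ≤ ∑ y, ∑ x, |v x| * A x y := Finset.sum_le_sum fun y _ =>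
        (Finset.abs_sum_le_sum_abs _ _).trans_eq <| Finset.sum_congr rfl fun x _ => by
          rw [abs_mul, abs_of_nonneg ((hA x).1 y)]
    _ = ∑ x, |v x| * ∑ y, A x y := by rw [Finset.sum_comm]; simp_rw [Finset.mul_sum]
    _ = l1 v := by simp [(hA _).2, l1]

end Simplex

def LipschitzL1With {d : ℕ} (LG : ℝ) (G : (Fin d → ℝ) → Matrix (Fin d) (Fin d) ℝ) : Prop :=
  ∀ m ∈ PD d, ∀ m' ∈ PD d, (∑ x, ∑ y, |G m x y - G m' x y|) ≤ LG * l1 (fun x => m x - m' x)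

namespace LipschitzL1With

variable {d : ℕ} {G : (Fin d → ℝ) → Matrix (Fin d) (Fin d) ℝ} {LG : ℝ}

lemma row_le (hG : LipschitzL1With LG G) {m m' : Fin d → ℝ} (hm : m ∈ PD d) (hm' : m' ∈ PD d)
    (z : Fin d) : l1 (G m z - G m' z) ≤ LG * l1 (m - m') :=
  (Finset.single_le_sum (f := fun x => ∑ y, |G m x y - G m' x y|)
    (fun _ _ => Finset.sum_nonneg fun _ _ => abs_nonneg _) (Finset.mem_univ z)).trans
    (hG m hm m' hm')

lemma continuousOn (hG : LipschitzL1With LG G) : ContinuousOn G (PD d) := by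
  refine continuousOn_pi.2 fun z => continuousOn_pi.2 fun y m₀ hm₀ => ?_
  rw [ContinuousWithinAt, tendsto_iff_norm_sub_tendsto_zero]
  have hl1 : Tendsto (fun m => LG * l1 (m - m₀)) (𝓝[PD d] m₀) (𝓝 0) := by
    have : Continuous fun m : Fin d → ℝ => LG * l1 (m - m₀) := by unfold l1; fun_prop
    simpa [l1] using (this.tendsto m₀).mono_left nhdsWithin_le_nhds
  refine squeeze_zero' (Eventually.of_forall fun _ => norm_nonneg _)
    (eventually_nhdsWithin_of_forall fun m hm => ?_) hl1
  exact (abs_le_l1 (G m z - G m₀ z) y).trans (hG.row_le hm hm₀ z)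

lemma exists_pos_le_sum_pow (hG : LipschitzL1With LG G) (K : ℕ) (x : Fin d)
    (hpos : ∀ m ∈ PD d, ∀ z, 0 < ∑ j ∈ Finset.range K, (G m ^ (j + 1)) z x) :
    ∃ ε > 0, ∀ m ∈ PD d, ∀ z, ε ≤ ∑ j ∈ Finset.range K, (G m ^ (j + 1)) z x := by
  have hcont : ContinuousOn (fun p : (Fin d → ℝ) × Fin d =>
      ∑ j ∈ Finset.range K, (G p.1 ^ (j + 1)) p.2 x) (PD d ×ˢ univ) := by
    refine continuousOn_prod_of_discrete_right.2 fun z => ?_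
    simp only [mem_prod, mem_univ, and_true, ofPred_mem_eq]
    exact continuousOn_finsetSum _ fun j _ =>
      (continuous_apply x).comp_continuousOn <| (continuous_apply z).comp_continuousOn <|
        hG.continuousOn.pow (j + 1)
  obtain ⟨ε, hε, hle⟩ := ((isCompact_stdSimplex _ _).prod isCompact_univ).exists_forall_le'
    hcont fun p hp => hpos p.1 hp.1 p.2
  exact ⟨ε, hε, fun m hm z => hle (m, z) ⟨hm, mem_univ z⟩⟩

end LipschitzL1With

section FiniteValued

variable {Ω β : Type*} [MeasurableSpace Ω] [MeasurableSpace β] [MeasurableSingletonClass β]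
  {μ : Measure Ω} [IsFiniteMeasure μ] {f : Ω → β}

lemma integrable_of_factorsThrough [Finite β] (hf : Measurable f) {g : Ω → ℝ}
    (hgf : g.FactorsThrough f) : Integrable g μ := by
  have hg : g = Function.extend f g 0 ∘ f := funext fun ω => (hgf.extend_apply 0 ω).symm
  rw [hg]
  exact Integrable.of_finite.comp_measurable hf

lemma setIntegral_comp_eq_sum [Fintype β] (hf : Measurable f) (s : Set Ω) (g : β → ℝ) :
    ∫ ω in s, g (f ω) ∂μ = ∑ b, μ.real (s ∩ f ⁻¹' {b}) * g b := by
  rw [← integral_map hf.aemeasurable Integrable.of_finite.aestronglyMeasurable,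
    integral_fintype .of_finite]
  refine Finset.sum_congr rfl fun b _ => ?_
  rw [smul_eq_mul, measureReal_def, Measure.map_apply hf (measurableSet_singleton b),
    Measure.restrict_apply (hf (measurableSet_singleton b)), inter_comm, measureReal_def]

lemma measureReal_eq_sum_inter_preimage [Fintype β] (hf : Measurable f) (s : Set Ω) :
    μ.real s = ∑ b, μ.real (s ∩ f ⁻¹' {b}) := by
  simpa [measureReal_restrict_apply (hf (measurableSet_singleton _)), inter_comm] using
    (sum_measureReal_preimage_singleton (μ := μ.restrict s) Finset.univ
      fun b _ => hf (measurableSet_singleton b)).symm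

end FiniteValued

lemma measure_iInter_eq_zero_of_measureReal_add_le {Ω : Type*} [MeasurableSpace Ω]
    {μ : Measure Ω} [IsFiniteMeasure μ] {B : ℕ → Set Ω} {r : ℝ} {N₀ K : ℕ} (hr : r < 1)
    (h : ∀ N ≥ N₀, μ.real (B (N + K)) ≤ r * μ.real (B N)) : μ (⋂ N, B N) = 0 := by
  set r' := max r 0
  have hiter : ∀ n : ℕ, μ.real (B (N₀ + n * K)) ≤ r' ^ n * μ.real (B N₀) := by
    intro n
    induction n with
    | zero => simp
    | succ n ih =>
      calc μ.real (B (N₀ + (n + 1) * K)) = μ.real (B (N₀ + n * K + K)) := by ring_nf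
        _ ≤ r * μ.real (B (N₀ + n * K)) := h _ (by omega)
        _ ≤ r' * (r' ^ n * μ.real (B N₀)) :=
          mul_le_mul (le_max_left _ _) ih measureReal_nonneg (le_max_right _ _)
        _ = r' ^ (n + 1) * μ.real (B N₀) := by ring
  have htend : Tendsto (fun n : ℕ => r' ^ n * μ.real (B N₀)) atTop (𝓝 0) := by
    simpa using (tendsto_pow_atTop_nhds_zero_of_lt_one (le_max_right r 0)
      (max_lt hr one_pos)).mul_const (μ.real (B N₀))
  have hle : μ.real (⋂ N, B N) ≤ 0 := ge_of_tendsto' htend fun n =>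
    (measureReal_mono (iInter_subset _ _)).trans (hiter n)
  exact (measureReal_eq_zero_iff).1 (le_antisymm hle measureReal_nonneg)

section Filtration

variable {d : ℕ} {Ω : Type*} {X : ℕ → Ω → Fin d}

def trajectory (X : ℕ → Ω → Fin d) (n : ℕ) (ω : Ω) : Fin (n + 1) → Fin d := fun i => X i ω

lemma measurable_chainFilt {k n : ℕ} (hkn : k ≤ n) : Measurable[chainFilt X n] (X k) :=
  measurable_iff_comap_le.2 <| le_iSup_of_le (⟨k, by omega⟩ : Fin (n + 1)) le_rfl

lemma measurable_trajectory_chainFilt (n : ℕ) : Measurable[chainFilt X n] (trajectory X n) :=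
  letI := chainFilt X n
  measurable_pi_lambda _ fun i => measurable_chainFilt (Nat.lt_succ_iff.mp i.2)

lemma chainFilt_mono : Monotone (chainFilt X) := fun _ _ hnm =>
  iSup_le fun i => le_iSup_of_le (⟨i, by omega⟩ : Fin _) le_rfl

lemma chainFilt_le [MeasurableSpace Ω] (hX : ∀ n, Measurable (X n)) (n : ℕ) :
    chainFilt X n ≤ ‹MeasurableSpace Ω› :=
  iSup_le fun i => (hX i).comap_le

end Filtration

def lawOn {Ω β : Type*} [MeasurableSpace Ω] (P : Measure Ω) (s : Set Ω) (Y : Ω → β) : β → ℝ :=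
  fun y => P.real (s ∩ Y ⁻¹' {y})

def noVisit {Ω β : Type*} (X : ℕ → Ω → β) (x : β) (N : ℕ) : Set Ω := {ω | ∀ i ≤ N, X i ω ≠ x}

lemma measurableSet_noVisit {d : ℕ} {Ω : Type*} {X : ℕ → Ω → Fin d} (x : Fin d) (N : ℕ) :
    MeasurableSet[chainFilt X N] (noVisit X x N) := by
  have : noVisit X x N = trajectory X N ⁻¹' {v | ∀ i, v i ≠ x} := by
    ext ω
    exact ⟨fun h i => h i (Nat.lt_succ_iff.mp i.2), fun h i hi => h ⟨i, Nat.lt_succ_of_le hi⟩⟩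
  rw [this]
  exact measurable_trajectory_chainFilt N (Set.to_countable _).measurableSet

namespace IsSelfInteractingChain

variable {d : ℕ} {Ω : Type*} [MeasurableSpace Ω] {P : Measure Ω}
  {G : (Fin d → ℝ) → Matrix (Fin d) (Fin d) ℝ} {x₀ : Fin d} {X : ℕ → Ω → Fin d}
  {L : ℕ → Ω → Fin d → ℝ}

lemma L_mem_PD (hchain : IsSelfInteractingChain P G x₀ X L) (n : ℕ) (ω : Ω) :
    L (n + 1) ω ∈ PD d := by
  refine ⟨fun x => ?_, ?_⟩
  · rw [hchain.emp]
    positivity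
  · simp_rw [hchain.emp, ← Finset.sum_div]
    rw [Finset.sum_comm]
    simp only [Finset.sum_ite_eq, Finset.mem_univ, if_true, Finset.sum_const, Finset.card_range,
      nsmul_eq_mul, mul_one, Nat.cast_succ]
    exact div_self (by positivity)

lemma L_pos_of_visit (hchain : IsSelfInteractingChain P G x₀ X L) {i n : ℕ} (hi : i ≤ n)
    (ω : Ω) : 0 < L (n + 1) ω (X i ω) := by
  rw [hchain.emp]
  refine div_pos (one_pos.trans_le ?_) (by positivity)
  simpa using Finset.single_le_sum (f := fun k => if X k ω = X i ω then (1 : ℝ) else 0)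
    (fun _ _ => by positivity) (Finset.mem_range.2 (Nat.lt_succ_of_le hi))

lemma l1_L_succ_sub_le (hchain : IsSelfInteractingChain P G x₀ X L) (n : ℕ) (ω : Ω) :
    l1 (L (n + 2) ω - L (n + 1) ω) ≤ 2 / (n + 2) := by
  set δ : Fin d → ℝ := Pi.single (X (n + 1) ω) 1
  have hstep : ∀ y, (L (n + 2) ω - L (n + 1) ω) y = (δ - L (n + 1) ω) y / (n + 2) := by
    intro y
    simp only [Pi.sub_apply, δ, Pi.single_apply, hchain.emp (n + 1), hchain.emp n,
      Finset.sum_range_succ _ (n + 1), eq_comm (a := y)]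
    push_cast
    field_simp
    ring
  calc l1 (L (n + 2) ω - L (n + 1) ω) = l1 (δ - L (n + 1) ω) / (n + 2) := by
        simp only [l1, hstep, abs_div, Finset.sum_div]
        rw [abs_of_pos (by positivity)]
    _ ≤ 2 / (n + 2) := by
        gcongr
        exact l1_sub_le_two (single_mem_stdSimplex ℝ _) (hchain.L_mem_PD n ω)

lemma l1_L_add_sub_le (hchain : IsSelfInteractingChain P G x₀ X L) (N j : ℕ) (ω : Ω) :
    l1 (L (N + j + 1) ω - L (N + 1) ω) ≤ 2 * j / (N + 1) := by
  induction j with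
  | zero => simp [l1]
  | succ j ih =>
    calc l1 (L (N + (j + 1) + 1) ω - L (N + 1) ω)
        ≤ l1 (L (N + j + 2) ω - L (N + j + 1) ω) + l1 (L (N + j + 1) ω - L (N + 1) ω) :=
          l1_sub_le_add _ _ _
      _ ≤ 2 / (N + 1) + 2 * j / (N + 1) := by
          refine add_le_add ((hchain.l1_L_succ_sub_le (N + j) ω).trans ?_) ih
          exact div_le_div_of_nonneg_left zero_le_two (by positivity) (by push_cast; linarith)
      _ = 2 * ↑(j + 1) / (N + 1) := by push_cast; ring

lemma factorsThrough_trajectory (hchain : IsSelfInteractingChain P G x₀ X L) {β : Type*}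
    (n : ℕ) (F : (Fin d → ℝ) → Fin d → β) :
    (fun ω => F (L (n + 1) ω) (X n ω)).FactorsThrough (trajectory X n) := by
  intro ω ω' h
  have hX : ∀ i ≤ n, X i ω = X i ω' := fun i hi => congr_fun h ⟨i, Nat.lt_succ_of_le hi⟩
  have hL : L (n + 1) ω = L (n + 1) ω' := funext fun y => by
    simp only [hchain.emp]
    congr 1
    exact Finset.sum_congr rfl fun i hi => by
      rw [hX i (Nat.lt_succ_iff.mp (Finset.mem_range.mp hi))]
  simp only [hL, hX n le_rfl]

lemma measurable_trajectory (hchain : IsSelfInteractingChain P G x₀ X L) (n : ℕ) :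
    Measurable (trajectory X n) :=
  (measurable_trajectory_chainFilt n).mono (chainFilt_le hchain.measX n) le_rfl

lemma integrable_comp (hchain : IsSelfInteractingChain P G x₀ X L) [IsFiniteMeasure P]
    (n : ℕ) (F : (Fin d → ℝ) → Fin d → ℝ) : Integrable (fun ω => F (L (n + 1) ω) (X n ω)) P :=
  integrable_of_factorsThrough (hchain.measurable_trajectory n)
    (hchain.factorsThrough_trajectory n F)

lemma measureReal_inter_succ (hchain : IsSelfInteractingChain P G x₀ X L) {n : ℕ} {s : Set Ω}
    (hs : MeasurableSet[chainFilt X n] s) (y : Fin d) :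
    P.real (s ∩ X (n + 1) ⁻¹' {y}) = ∫ ω in s, G (L (n + 1) ω) (X n ω) y ∂P := by
  have hy : MeasurableSet (X (n + 1) ⁻¹' {y}) := hchain.measX _ (measurableSet_singleton y)
  rw [← hchain.cond n y s hs]
  have hind : (fun ω => if X (n + 1) ω = y then (1 : ℝ) else 0)
      = (X (n + 1) ⁻¹' {y}).indicator 1 := by
    ext ω
    by_cases h : X (n + 1) ω = y <;> simp [h]
  rw [hind, setIntegral_indicator hy]
  simp

variable {LG : ℝ} {N : ℕ} {s : Set Ω} {m : Fin d → ℝ}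

open Matrix in
lemma l1_lawOn_succ_sub_le (hchain : IsSelfInteractingChain P G x₀ X L) [IsFiniteMeasure P]
    (hlip : LipschitzL1With LG G) (hLG : 0 ≤ LG) (hs : MeasurableSet[chainFilt X N] s)
    (hm : ∀ ω ∈ s, L (N + 1) ω = m) (j : ℕ) :
    l1 (lawOn P s (X (N + j + 1)) - lawOn P s (X (N + j)) ᵥ* G m)
      ≤ 2 * LG * j / (N + 1) * P.real s := by
  have hsj : MeasurableSet[chainFilt X (N + j)] s := chainFilt_mono (Nat.le_add_right N j) _ hs
  have hdiff : ∀ y, (lawOn P s (X (N + j + 1)) - lawOn P s (X (N + j)) ᵥ* G m) y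
      = ∫ ω in s, (G (L (N + j + 1) ω) (X (N + j) ω) y - G m (X (N + j) ω) y) ∂P := by
    intro y
    rw [integral_sub (hchain.integrable_comp (N + j) fun m' z => G m' z y).integrableOn
      (hchain.integrable_comp (N + j) fun _ z => G m z y).integrableOn,
      setIntegral_comp_eq_sum (hchain.measX _) s fun z => G m z y,
      ← hchain.measureReal_inter_succ hsj]
    rfl
  have hrow : ∀ ω ∈ s, ∑ y, |G (L (N + j + 1) ω) (X (N + j) ω) y - G m (X (N + j) ω) y|
      ≤ 2 * LG * j / (N + 1) := by
    intro ω hω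
    rw [← hm ω hω]
    calc _ ≤ LG * l1 (L (N + j + 1) ω - L (N + 1) ω) :=
          hlip.row_le (hchain.L_mem_PD _ ω) (hchain.L_mem_PD _ ω) _
      _ ≤ LG * (2 * j / (N + 1)) := mul_le_mul_of_nonneg_left (hchain.l1_L_add_sub_le N j ω) hLG
      _ = 2 * LG * j / (N + 1) := by ring
  calc l1 (lawOn P s (X (N + j + 1)) - lawOn P s (X (N + j)) ᵥ* G m)
      = ∑ y, |∫ ω in s, (G (L (N + j + 1) ω) (X (N + j) ω) y - G m (X (N + j) ω) y) ∂P| := by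
        simp only [l1, hdiff]
    _ ≤ ∑ y, ∫ ω in s, |G (L (N + j + 1) ω) (X (N + j) ω) y - G m (X (N + j) ω) y| ∂P :=
        Finset.sum_le_sum fun y _ => abs_integral_le_integral_abs
    _ = ∫ ω in s, ∑ y, |G (L (N + j + 1) ω) (X (N + j) ω) y - G m (X (N + j) ω) y| ∂P :=
        (integral_finsetSum _ fun y _ =>
          (hchain.integrable_comp (N + j) fun m' z => |G m' z y - G m z y|).integrableOn).symm
    _ ≤ ∫ _ in s, 2 * LG * j / (N + 1) ∂P :=
        setIntegral_mono_on
          (hchain.integrable_comp (N + j) fun m' z => ∑ y, |G m' z y - G m z y|).integrableOn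
          (integrableOn_const (measure_ne_top P s)) (chainFilt_le hchain.measX N s hs) hrow
    _ = 2 * LG * j / (N + 1) * P.real s := by rw [setIntegral_const, smul_eq_mul, mul_comm]

open Matrix in
lemma l1_lawOn_sub_le (hchain : IsSelfInteractingChain P G x₀ X L) [IsFiniteMeasure P]
    (hker : ∀ m ∈ PD d, IsKernel (G m)) (hlip : LipschitzL1With LG G) (hLG : 0 ≤ LG)
    (hs : MeasurableSet[chainFilt X N] s) (hmPD : m ∈ PD d) {z₀ : Fin d}
    (hconst : ∀ ω ∈ s, L (N + 1) ω = m ∧ X N ω = z₀) (j : ℕ) :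
    l1 (lawOn P s (X (N + j)) - P.real s • (G m ^ j) z₀)
      ≤ 2 * LG * j ^ 2 / (N + 1) * P.real s := by
  induction j with
  | zero =>
    have hlaw : lawOn P s (X N) = P.real s • (1 : Matrix (Fin d) (Fin d) ℝ) z₀ := by
      funext y
      by_cases hy : z₀ = y
      · subst hy
        have : s ∩ X N ⁻¹' {z₀} = s := inter_eq_left.2 fun ω hω => (hconst ω hω).2
        simp [lawOn, this]
      · have : s ∩ X N ⁻¹' {y} = ∅ := eq_empty_of_forall_notMem fun ω hω =>
          hy ((hconst ω hω.1).2.symm.trans hω.2)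
        simp [lawOn, this, hy]
    simp [hlaw, l1]
  | succ j ih =>
    have hrow : (G m ^ (j + 1)) z₀ = (G m ^ j) z₀ ᵥ* G m := by
      rw [pow_succ, mul_apply_eq_vecMul]
    calc l1 (lawOn P s (X (N + (j + 1))) - P.real s • (G m ^ (j + 1)) z₀)
        ≤ l1 (lawOn P s (X (N + j + 1)) - lawOn P s (X (N + j)) ᵥ* G m)
          + l1 ((lawOn P s (X (N + j)) - P.real s • (G m ^ j) z₀) ᵥ* G m) := by
          rw [hrow, sub_vecMul, smul_vecMul]
          exact l1_sub_le_add _ _ _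
      _ ≤ 2 * LG * j / (N + 1) * P.real s + 2 * LG * j ^ 2 / (N + 1) * P.real s :=
          add_le_add (hchain.l1_lawOn_succ_sub_le hlip hLG hs (fun ω hω => (hconst ω hω).1) j)
            (((hker m hmPD).l1_vecMul_le _).trans ih)
      _ ≤ 2 * LG * ↑(j + 1) ^ 2 / (N + 1) * P.real s := by
          rw [← add_mul, ← add_div]
          gcongr
          push_cast
          nlinarith

lemma sum_measureReal_hit_ge_of_const (hchain : IsSelfInteractingChain P G x₀ X L)
    [IsFiniteMeasure P] (hker : ∀ m ∈ PD d, IsKernel (G m)) (hlip : LipschitzL1With LG G)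
    (hLG : 0 ≤ LG) (hs : MeasurableSet[chainFilt X N] s) (hmPD : m ∈ PD d) {z₀ : Fin d}
    (hconst : ∀ ω ∈ s, L (N + 1) ω = m ∧ X N ω = z₀) {K : ℕ} {x : Fin d} {ε : ℝ}
    (hε : ∀ m ∈ PD d, ∀ z, ε ≤ ∑ j ∈ Finset.range K, (G m ^ (j + 1)) z x) :
    P.real s * (ε - 2 * LG * K ^ 3 / (N + 1))
      ≤ ∑ j ∈ Finset.range K, P.real (s ∩ X (N + j + 1) ⁻¹' {x}) := by
  have hj : ∀ j ∈ Finset.range K, P.real s * (G m ^ (j + 1)) z₀ x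
      - 2 * LG * K ^ 2 / (N + 1) * P.real s ≤ P.real (s ∩ X (N + j + 1) ⁻¹' {x}) := by
    intro j hj
    have herr : 2 * LG * ↑(j + 1) ^ 2 / (N + 1) * P.real s
        ≤ 2 * LG * K ^ 2 / (N + 1) * P.real s := by
      gcongr
      exact_mod_cast Finset.mem_range.1 hj
    have := (abs_le.1 ((abs_le_l1 _ x).trans
      ((hchain.l1_lawOn_sub_le hker hlip hLG hs hmPD hconst (j + 1)).trans herr))).1
    simp only [Pi.sub_apply, Pi.smul_apply, smul_eq_mul, lawOn, ← add_assoc] at this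
    linarith
  calc P.real s * (ε - 2 * LG * K ^ 3 / (N + 1))
      ≤ ∑ j ∈ Finset.range K, (P.real s * (G m ^ (j + 1)) z₀ x
          - 2 * LG * K ^ 2 / (N + 1) * P.real s) := by
        rw [Finset.sum_sub_distrib, ← Finset.mul_sum, Finset.sum_const, Finset.card_range,
          nsmul_eq_mul]
        have := mul_le_mul_of_nonneg_left (hε m hmPD z₀) (measureReal_nonneg (μ := P) (s := s))
        have herr : (K : ℝ) * (2 * LG * K ^ 2 / (N + 1) * P.real s)
            = P.real s * (2 * LG * K ^ 3 / (N + 1)) := by ring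
        rw [herr, mul_sub]
        linarith
    _ ≤ ∑ j ∈ Finset.range K, P.real (s ∩ X (N + j + 1) ⁻¹' {x}) := Finset.sum_le_sum hj

lemma sum_measureReal_hit_ge (hchain : IsSelfInteractingChain P G x₀ X L)
    [IsFiniteMeasure P] (hker : ∀ m ∈ PD d, IsKernel (G m)) (hlip : LipschitzL1With LG G)
    (hLG : 0 ≤ LG) (hs : MeasurableSet[chainFilt X N] s) {K : ℕ} {x : Fin d} {ε : ℝ}
    (hε : ∀ m ∈ PD d, ∀ z, ε ≤ ∑ j ∈ Finset.range K, (G m ^ (j + 1)) z x) :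
    P.real s * (ε - 2 * LG * K ^ 3 / (N + 1))
      ≤ ∑ j ∈ Finset.range K, P.real (s ∩ X (N + j + 1) ⁻¹' {x}) := by
  have htraj := hchain.measurable_trajectory N
  have hatom : ∀ v, P.real (s ∩ trajectory X N ⁻¹' {v}) * (ε - 2 * LG * K ^ 3 / (N + 1))
      ≤ ∑ j ∈ Finset.range K, P.real (s ∩ trajectory X N ⁻¹' {v} ∩ X (N + j + 1) ⁻¹' {x}) := by
    intro v
    obtain hempty | ⟨ω₀, hω₀⟩ := (s ∩ trajectory X N ⁻¹' {v}).eq_empty_or_nonempty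
    · simp [hempty]
    refine hchain.sum_measureReal_hit_ge_of_const hker hlip hLG
      (hs.inter (measurable_trajectory_chainFilt N (measurableSet_singleton v)))
      (hchain.L_mem_PD N ω₀) (fun ω hω => Prod.ext_iff.1 <| hchain.factorsThrough_trajectory N
        Prod.mk ((hω.2 : trajectory X N ω = v).trans (hω₀.2 : trajectory X N ω₀ = v).symm)) hε
  calc P.real s * (ε - 2 * LG * K ^ 3 / (N + 1))
      = ∑ v, P.real (s ∩ trajectory X N ⁻¹' {v}) * (ε - 2 * LG * K ^ 3 / (N + 1)) := by
        rw [measureReal_eq_sum_inter_preimage htraj s, Finset.sum_mul]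
    _ ≤ ∑ v, ∑ j ∈ Finset.range K,
          P.real (s ∩ trajectory X N ⁻¹' {v} ∩ X (N + j + 1) ⁻¹' {x}) :=
        Finset.sum_le_sum fun v _ => hatom v
    _ = ∑ j ∈ Finset.range K, P.real (s ∩ X (N + j + 1) ⁻¹' {x}) := by
        rw [Finset.sum_comm]
        refine Finset.sum_congr rfl fun j _ => ?_
        rw [measureReal_eq_sum_inter_preimage htraj (s ∩ _)]
        exact Finset.sum_congr rfl fun v _ => by rw [inter_right_comm]

lemma measureReal_noVisit_add_le (hchain : IsSelfInteractingChain P G x₀ X L)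
    [IsFiniteMeasure P] (hker : ∀ m ∈ PD d, IsKernel (G m)) (hlip : LipschitzL1With LG G)
    (hLG : 0 ≤ LG) {K : ℕ} (hK : 0 < K) {x : Fin d} {ε : ℝ}
    (hε : ∀ m ∈ PD d, ∀ z, ε ≤ ∑ j ∈ Finset.range K, (G m ^ (j + 1)) z x) (N : ℕ) :
    P.real (noVisit X x (N + K))
      ≤ (1 - (ε - 2 * LG * K ^ 3 / (N + 1)) / K) * P.real (noVisit X x N) := by
  have hsub : noVisit X x (N + K) ⊆ noVisit X x N := fun ω hω i hi => hω i (by omega)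
  have hmeas : MeasurableSet (noVisit X x (N + K)) :=
    chainFilt_le hchain.measX _ _ (measurableSet_noVisit x (N + K))
  have hhit : ∀ j ∈ Finset.range K, P.real (noVisit X x N ∩ X (N + j + 1) ⁻¹' {x})
      ≤ P.real (noVisit X x N) - P.real (noVisit X x (N + K)) := by
    intro j hj
    rw [← measureReal_sdiff hsub hmeas]
    refine measureReal_mono fun ω hω => ⟨hω.1, fun h => h (N + j + 1) ?_ hω.2⟩
    have := Finset.mem_range.1 hj
    omega
  have key := (hchain.sum_measureReal_hit_ge hker hlip hLG (measurableSet_noVisit x N) hε).trans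
    (Finset.sum_le_sum hhit)
  rw [Finset.sum_const, Finset.card_range, nsmul_eq_mul] at key
  have hK' : (0 : ℝ) < K := by exact_mod_cast hK
  rw [sub_mul, one_mul, div_mul_eq_mul_div, le_sub_iff_add_le, ← le_sub_iff_add_le',
    div_le_iff₀ hK']
  linarith

end IsSelfInteractingChain

theorem empirical_measure_nondegenerate_general {d : ℕ} {Ω : Type*} [MeasurableSpace Ω]
    (P : Measure Ω) [IsProbabilityMeasure P]
    (G : (Fin d → ℝ) → Matrix (Fin d) (Fin d) ℝ) (x₀ : Fin d)
    (X : ℕ → Ω → Fin d) (L : ℕ → Ω → Fin d → ℝ)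
    (hchain : IsSelfInteractingChain P G x₀ X L)
    (hG : AssumptionL G)
    (K : ℕ) (hK : 1 ≤ K)
    (hpos : ∀ ms : ℕ → Fin d → ℝ, (∀ i, ms i ∈ PD d) → ∀ x y,
      0 < ∑ j ∈ Finset.range K,
        (((List.range (j + 1)).map fun i => G (ms i)).prod) x y) :
    ∀ x, P {ω | ∃ n : ℕ, 0 < L (n + 1) ω x} = 1 := by
  intro x
  obtain ⟨hker, LG, hLG, hlip⟩ := hG
  obtain ⟨ε, hε, hεle⟩ := LipschitzL1With.exists_pos_le_sum_pow hlip K x fun m hm z => by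
    simpa [List.map_const', List.prod_replicate] using hpos (fun _ => m) (fun _ => hm) z x
  obtain ⟨N₀, hN₀⟩ : ∃ N₀ : ℕ, ∀ N ≥ N₀, 2 * LG * K ^ 3 / ((N : ℝ) + 1) ≤ ε / 2 :=
    eventually_atTop.1 <| (tendsto_const_nhds.div_atTop
      (tendsto_natCast_atTop_atTop.atTop_add tendsto_const_nhds)).eventually
      (ge_mem_nhds (half_pos hε))
  have hK' : (0 : ℝ) < K := by exact_mod_cast hK
  have hnull : P (⋂ N, noVisit X x N) = 0 := by
    refine measure_iInter_eq_zero_of_measureReal_add_le (r := 1 - ε / 2 / K) (N₀ := N₀)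
      (by linarith [div_pos (half_pos hε) hK']) fun N hN =>
        (hchain.measureReal_noVisit_add_le hker hlip hLG.le hK hεle N).trans ?_
    gcongr
    linarith [hN₀ N hN]
  have hvisit : (⋂ N, noVisit X x N)ᶜ ⊆ {ω | ∃ n, 0 < L (n + 1) ω x} := by
    intro ω hω
    obtain ⟨N, i, hi, rfl⟩ : ∃ N, ∃ i ≤ N, X i ω = x := by simpa [noVisit] using hω
    exact ⟨N, hchain.L_pos_of_visit hi ω⟩
  have hmeas : MeasurableSet (⋂ N, noVisit X x N) :=
    .iInter fun N => chainFilt_le hchain.measX N _ (measurableSet_noVisit x N)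
  exact le_antisymm prob_le_one
    (((prob_compl_eq_one_iff hmeas).2 hnull).symm.le.trans (measure_mono hvisit))

/-- **(Appendix Lemma A.2.)** Suppose `G` satisfies Assumption L and for some `K ∈ ℕ`,
for all `m₁, …, m_K ∈ P(Δ°)` and all `x, y`,
`∑_{j=1}^K (G(m₁)G(m₂)⋯G(m_j))(x,y) > 0`. Then for every `x`,
`P(∃ n : L^n(x) > 0) = 1`. -/
theorem empirical_measure_nondegenerate {d : ℕ} [NeZero d] {Ω : Type*} [MeasurableSpace Ω]
    (P : Measure Ω) [IsProbabilityMeasure P]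
    (G : (Fin d → ℝ) → Matrix (Fin d) (Fin d) ℝ) (x₀ : Fin d)
    (X : ℕ → Ω → Fin d) (L : ℕ → Ω → Fin d → ℝ)
    (hchain : IsSelfInteractingChain P G x₀ X L)
    (hG : AssumptionL G)
    (K : ℕ) (hK : 1 ≤ K)
    (hpos : ∀ ms : ℕ → Fin d → ℝ, (∀ i, ms i ∈ PD d) → ∀ x y,
      0 < ∑ j ∈ Finset.range K,
        (((List.range (j + 1)).map fun i => G (ms i)).prod) x y) :
    ∀ x, P {ω | ∃ n : ℕ, 0 < L (n + 1) ω x} = 1 :=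
  empirical_measure_nondegenerate_general P G x₀ X L hchain hG K hK hpos

end
end

section
/- (Shift estimate in the proof of Lemma 4.2(f), display (4.40)) Let t ≥ 0 and let h : [0,t] → ℝ be continuous. Then sup over all functions σ : ℕ₀ → [0,1] of |∫₀ᵗ h(s)·σ(m(t_n − s) + 1) ds − ∫₀ᵗ h(s)·σ(m(t_n − s)) ds| tends to 0 as n → ∞ (where the statement is for all n large enough that t_n ≥ t). -/
noncomputable section

/-- The interpolation times `t_k = ∑_{j=1}^k 1/(j+1)` (so `t_0 = 0`). -/
def tSeq (k : ℕ) : ℝ := ∑ j ∈ Finset.range k, (1 : ℝ) / (j + 2)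

/-- `m(s) = sup {k ∈ ℕ₀ : t_k ≤ s}`. -/
def mFun (s : ℝ) : ℕ := sSup {k : ℕ | tSeq k ≤ s}

/-- `ψ_e(s) = m(s) + 2`. -/
def psiE (s : ℝ) : ℝ := (mFun s : ℝ) + 2

section AuxShift
open Filter

lemma tSeq_succ (k : ℕ) : tSeq (k+1) = tSeq k + 1/(k+2) := Finset.sum_range_succ _ _

lemma tSeq_zero : tSeq 0 = 0 := rfl

lemma tSeq_strictMono : StrictMono tSeq := by
  apply strictMono_nat_of_lt_succ
  intro k
  rw [tSeq_succ]
  have : (0:ℝ) < 1/(k+2) := by positivity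
  linarith

lemma tSeq_nonneg (k : ℕ) : 0 ≤ tSeq k := by
  have := tSeq_strictMono.monotone (Nat.zero_le k)
  rwa [tSeq_zero] at this

lemma tSeq_tendsto : Tendsto tSeq atTop atTop := by
  have h1 : Tendsto (fun n : ℕ => ∑ i ∈ Finset.range n, (1 / (i + 1) : ℝ)) atTop atTop :=
    Real.tendsto_sum_range_one_div_nat_succ_atTop
  have h2 : Tendsto (fun n : ℕ => ∑ i ∈ Finset.range (n+1), (1 / (i + 1) : ℝ)) atTop atTop :=
    h1.comp (tendsto_add_atTop_nat 1)
  have h3 : ∀ n : ℕ, tSeq n = (∑ i ∈ Finset.range (n+1), (1 / (i + 1) : ℝ)) - 1 := by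
    intro n
    rw [Finset.sum_range_succ' (fun i => (1 / ((i:ℝ) + 1))) n]
    have : ∀ i ∈ Finset.range n, (1 : ℝ) / (↑(i+1) + 1) = 1 / (i + 2) := by
      intro i _; push_cast; ring_nf
    rw [Finset.sum_congr rfl this]
    unfold tSeq
    ring
  have : tSeq = fun n => (∑ i ∈ Finset.range (n+1), (1 / (i + 1) : ℝ)) + (-1) := by
    funext n; rw [h3 n]; ring
  rw [this]
  exact tendsto_atTop_add_const_right atTop (-1) h2

lemma bddAbove_tSet (x : ℝ) : BddAbove {k : ℕ | tSeq k ≤ x} := by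
  obtain ⟨N, hN⟩ := (tSeq_tendsto.eventually_gt_atTop x).exists
  exact ⟨N, fun j hj => (tSeq_strictMono.lt_iff_lt.mp (lt_of_le_of_lt hj hN)).le⟩

lemma le_mFun {k : ℕ} {x : ℝ} (h : tSeq k ≤ x) : k ≤ mFun x :=
  le_csSup (bddAbove_tSet x) h

lemma mFun_eq {k : ℕ} {x : ℝ} (h1 : tSeq k ≤ x) (h2 : x < tSeq (k+1)) : mFun x = k := by
  refine le_antisymm (csSup_le ⟨k, h1⟩ fun j hj => ?_) (le_mFun h1)
  by_contra hc
  push_neg at hc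
  have : tSeq (k+1) ≤ tSeq j := tSeq_strictMono.monotone hc
  have : tSeq j ≤ x := hj
  linarith [tSeq_strictMono.monotone hc, (hj : tSeq j ≤ x)]

lemma tSeq_le_of_mem {x : ℝ} (hx : 0 ≤ x) : tSeq (mFun x) ≤ x := by
  have : mFun x ∈ {k : ℕ | tSeq k ≤ x} :=
    Nat.sSup_mem ⟨0, by simpa [tSeq_zero] using hx⟩ (bddAbove_tSet x)
  exact this

lemma lt_tSeq_succ_mFun {x : ℝ} : x < tSeq (mFun x + 1) := by
  by_contra hc
  push_neg at hc
  have := le_mFun hc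
  omega

lemma mFun_tendsto_comp {x : ℕ → ℝ} (hx : Tendsto x atTop atTop) :
    Tendsto (fun n => mFun (x n)) atTop atTop := by
  rw [tendsto_atTop_atTop]
  intro C
  obtain ⟨N, hN⟩ := Filter.eventually_atTop.mp (hx.eventually_ge_atTop (tSeq C))
  exact ⟨N, fun n hn => le_mFun (hN n hn)⟩

lemma abel_aux (M : ℕ) (e d : ℕ → ℝ) :
    (∑ i ∈ Finset.range (M+1), e i * d i) - (∑ i ∈ Finset.range (M+1), e (i+1) * d i)
    = (∑ i ∈ Finset.range M, e (i+1) * (d (i+1) - d i)) + e 0 * d 0 - e (M+1) * d M := by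
  induction M with
  | zero => simp
  | succ M ih =>
    rw [Finset.sum_range_succ (fun i => e i * d i), Finset.sum_range_succ (fun i => e (i+1) * d i),
      Finset.sum_range_succ (fun i => e (i+1) * (d (i+1) - d i))]
    have := ih
    ring_nf
    ring_nf at this
    linarith

set_option maxHeartbeats 2000000 in
open MeasureTheory intervalIntegral in
lemma key (t : ℝ) (ht : 0 < t) (h : ℝ → ℝ)
    (Mh : ℝ) (hMb : ∀ x ∈ Set.Icc (0:ℝ) t, |h x| ≤ Mh)
    (hInt : ∀ u v : ℝ, u ∈ Set.Icc (0:ℝ) t → v ∈ Set.Icc (0:ℝ) t →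
      IntervalIntegrable h MeasureTheory.volume u v)
    (ε δ : ℝ) (hε : 0 < ε) (hδ : 0 < δ)
    (huc : ∀ x ∈ Set.Icc (0:ℝ) t, ∀ y ∈ Set.Icc (0:ℝ) t, |x - y| ≤ δ → |h x - h y| ≤ ε)
    (n : ℕ) (hn : t ≤ tSeq n)
    (hKδ : 1/((mFun (tSeq n - t) : ℝ) + 2) ≤ δ)
    (σ : ℕ → ℝ) (hσ : ∀ k, σ k ∈ Set.Icc (0:ℝ) 1) :
    |(∫ s in (0:ℝ)..t, h s * σ (mFun (tSeq n - s) + 1)) -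
      ∫ s in (0:ℝ)..t, h s * σ (mFun (tSeq n - s))|
      ≤ 2*ε*t + 5*Mh/((mFun (tSeq n - t) : ℝ) + 2) := by
  set K := mFun (tSeq n - t) with hKdef
  have h0Mh : 0 ≤ Mh := le_trans (abs_nonneg _) (hMb 0 ⟨le_refl _, ht.le⟩)
  have htn : 0 ≤ tSeq n - t := by linarith
  have htK : tSeq K ≤ tSeq n - t := tSeq_le_of_mem htn
  have htK2 : tSeq n - t < tSeq (K+1) := lt_tSeq_succ_mFun
  have hKn : K < n := tSeq_strictMono.lt_iff_lt.mp (by linarith : tSeq K < tSeq n)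
  have hKpos : (0:ℝ) < (K:ℝ) + 2 := by positivity
  set w : ℕ → ℝ := fun j => min t (tSeq n - tSeq j) with hw
  set M := n - K - 1 with hM
  have hwj : ∀ j, K+1 ≤ j → w j = tSeq n - tSeq j := by
    intro j hj
    have h1 : tSeq (K+1) ≤ tSeq j := tSeq_strictMono.monotone hj
    exact min_eq_right (by linarith)
  have hw_le : ∀ j, w j ≤ tSeq n - tSeq j := fun j => min_le_right _ _
  have hw_le_t : ∀ j, w j ≤ t := fun j => min_le_left _ _
  have hw_nonneg : ∀ j, j ≤ n → 0 ≤ w j := by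
    intro j hj
    have := tSeq_strictMono.monotone hj
    exact le_min ht.le (by linarith)
  have hw_anti : ∀ j j', j ≤ j' → w j' ≤ w j := by
    intro j j' hjj
    have := tSeq_strictMono.monotone hjj
    exact min_le_min (le_refl t) (by linarith)
  set a : ℕ → ℝ := fun i => w (n - i) with ha
  have ha0 : a 0 = 0 := by
    have : w n = 0 := by
      have : tSeq n - tSeq n = 0 := by ring
      rw [hw]; simp [this, ht.le]
    simpa [ha] using this
  have haM : a (M+1) = t := by
    have hnMK : n - (M+1) = K := by omega
    have : a (M+1) = w K := by rw [ha]; simp only [hnMK]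
    rw [this, hw]
    exact min_eq_left (by linarith)
  have ha_mono : ∀ i i', i ≤ i' → a i ≤ a i' := by
    intro i i' hii
    exact hw_anti _ _ (Nat.sub_le_sub_left hii n)
  have ha_mem : ∀ i, a i ∈ Set.Icc (0:ℝ) t :=
    fun i => ⟨hw_nonneg _ (Nat.sub_le n i), hw_le_t _⟩
  -- the value of mFun on each piece
  have hmval : ∀ i, i ≤ M → ∀ s ∈ Set.Ioc (a i) (a (i+1)), mFun (tSeq n - s) = n - i - 1 := by
    intro i hi s hs
    set j := n - i with hj
    have hj1 : K + 1 ≤ j := by omega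
    have hji : n - (i+1) = j - 1 := by omega
    have haj : a i = w j := rfl
    have haj1 : a (i+1) = w (j-1) := by
      show w (n - (i+1)) = w (j-1)
      rw [hji]
    have h1 : tSeq n - s < tSeq j := by
      have h2 := hs.1
      rw [haj, hwj j hj1] at h2
      linarith
    have h2 : tSeq (j-1) ≤ tSeq n - s := by
      have h3 := hs.2
      rw [haj1] at h3
      have := hw_le (j-1)
      linarith
    have hj1' : j - 1 + 1 = j := by omega
    exact mFun_eq h2 (by rw [hj1']; exact h1)
  set d : ℕ → ℝ := fun i => ∫ s in (a i)..(a (i+1)), h s with hd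
  -- piece integral identity
  have hpiece : ∀ (g : ℕ → ℝ) i, i ≤ M →
      (∫ s in (a i)..(a (i+1)), h s * g (mFun (tSeq n - s))) = g (n - i - 1) * d i := by
    intro g i hi
    have hle : a i ≤ a (i+1) := ha_mono i (i+1) (by omega)
    have hdi : g (n - i - 1) * d i = ∫ s in Set.Ioc (a i) (a (i+1)), g (n - i - 1) * h s := by
      rw [MeasureTheory.integral_const_mul]
      congr 1
      exact intervalIntegral.integral_of_le hle
    rw [hdi, intervalIntegral.integral_of_le hle]
    apply MeasureTheory.setIntegral_congr_fun measurableSet_Ioc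
    intro s hs
    show h s * g (mFun (tSeq n - s)) = g (n - i - 1) * h s
    rw [hmval i hi s hs]; ring
  -- integrability of the pieces
  have hIntf : ∀ (g : ℕ → ℝ) i, i ≤ M →
      IntervalIntegrable (fun s => h s * g (mFun (tSeq n - s))) MeasureTheory.volume
        (a i) (a (i+1)) := by
    intro g i hi
    have hle : a i ≤ a (i+1) := ha_mono i (i+1) (by omega)
    rw [intervalIntegrable_iff, Set.uIoc_of_le hle]
    have base : MeasureTheory.IntegrableOn (fun s => g (n-i-1) * h s)
        (Set.Ioc (a i) (a (i+1))) MeasureTheory.volume := by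
      have h1 : MeasureTheory.IntegrableOn h (Set.Ioc (a i) (a (i+1)))
          MeasureTheory.volume := by
        have := hInt (a i) (a (i+1)) (ha_mem i) (ha_mem (i+1))
        rw [intervalIntegrable_iff, Set.uIoc_of_le hle] at this
        exact this
      exact h1.const_mul _
    apply base.congr_fun ?_ measurableSet_Ioc
    intro s hs
    show (fun s => g (n-i-1) * h s) s = h s * g (mFun (tSeq n - s))
    simp only
    rw [hmval i hi s hs]; ring
  -- decompose the integrals
  have hsum : ∀ (g : ℕ → ℝ),
      (∫ s in (0:ℝ)..t, h s * g (mFun (tSeq n - s))) =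
        ∑ i ∈ Finset.range (M+1), g (n - i - 1) * d i := by
    intro g
    have hs := intervalIntegral.sum_integral_adjacent_intervals
      (a := a) (n := M+1) (f := fun s => h s * g (mFun (tSeq n - s)))
      (fun i hi => hIntf g i (by omega))
    rw [ha0, haM] at hs
    rw [← hs]
    exact Finset.sum_congr rfl fun i hi => hpiece g i (by
      have := Finset.mem_range.mp hi; omega)
  -- lengths of the pieces
  have hlen_nonneg : ∀ i : ℕ, 0 ≤ a (i+1) - a i := fun i => by
    linarith [ha_mono i (i+1) (Nat.le_succ i)]
  have hlen : ∀ i, i ≤ M → a (i+1) - a i ≤ 1/((K:ℝ)+2) := by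
    intro i hi
    set j := n - i with hj
    have hj1 : K + 1 ≤ j := by omega
    have hji : n - (i+1) = j - 1 := by omega
    have haj : a i = w j := rfl
    have haj1 : a (i+1) = w (j-1) := by
      show w (n - (i+1)) = w (j-1)
      rw [hji]
    have h1 : w j = tSeq n - tSeq j := hwj j hj1
    have h2 : w (j-1) ≤ tSeq n - tSeq (j-1) := hw_le _
    have h3 : tSeq j = tSeq (j-1) + 1/(((j-1:ℕ):ℝ)+2) := by
      conv_lhs => rw [show j = (j-1)+1 by omega]
      exact tSeq_succ _
    have h4 : (1:ℝ)/(((j-1:ℕ):ℝ)+2) ≤ 1/((K:ℝ)+2) := by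
      apply one_div_le_one_div_of_le hKpos
      have : (K:ℝ) ≤ ((j-1:ℕ):ℝ) := Nat.cast_le.mpr (by omega)
      linarith
    rw [haj, haj1, h1]
    linarith
  set ρ : ℕ → ℝ := fun i => 1/(((n - i : ℕ):ℝ) + 1) with hρ
  have hρ_nonneg : ∀ i, 0 ≤ ρ i := fun i => by positivity
  have hlen_exact : ∀ i, i < M → a (i+1) - a i = ρ i := by
    intro i hi
    set j := n - i with hj
    have hj1 : K + 2 ≤ j := by omega
    have hji : n - (i+1) = j - 1 := by omega
    have haj : a i = w j := rfl
    have haj1 : a (i+1) = w (j-1) := by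
      show w (n - (i+1)) = w (j-1)
      rw [hji]
    have h1 : w j = tSeq n - tSeq j := hwj j (by omega)
    have h2 : w (j-1) = tSeq n - tSeq (j-1) := hwj (j-1) (by omega)
    have h3 : tSeq j = tSeq (j-1) + 1/(((j-1:ℕ):ℝ)+2) := by
      conv_lhs => rw [show j = (j-1)+1 by omega]
      exact tSeq_succ _
    have hcast : (((j-1:ℕ)):ℝ) + 2 = ((j:ℕ):ℝ) + 1 := by
      have h5 : ((j-1:ℕ):ℝ) = (j:ℝ) - 1 := by
        rw [Nat.cast_sub (by omega : 1 ≤ j)]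
        simp
      rw [h5]; ring
    show a (i+1) - a i = 1/(((n - i : ℕ):ℝ) + 1)
    rw [haj, haj1, h1, h2, h3, hcast, ← hj]
    ring
  -- bound on |d i|
  have hd_abs : ∀ i, i ≤ M → |d i| ≤ Mh * (a (i+1) - a i) := by
    intro i hi
    have hle : a i ≤ a (i+1) := ha_mono i (i+1) (by omega)
    have hb := intervalIntegral.norm_integral_le_of_norm_le_const (C := Mh)
      (f := h) (a := a i) (b := a (i+1)) (fun x hx => by
        rw [Set.uIoc_of_le hle] at hx
        rw [Real.norm_eq_abs]
        exact hMb x ⟨le_trans (ha_mem i).1 hx.1.le, le_trans hx.2 (ha_mem (i+1)).2⟩)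
    rw [Real.norm_eq_abs, abs_of_nonneg (by linarith : (0:ℝ) ≤ a (i+1) - a i)] at hb
    exact hb
  -- epsilon-closeness claim
  have hclaim : ∀ i, i ≤ M → ∀ q ∈ Set.Icc (0:ℝ) t,
      (∀ s ∈ Set.uIoc (a i) (a (i+1)), |s - q| ≤ δ) →
      |d i - (a (i+1) - a i) * h q| ≤ ε * (a (i+1) - a i) := by
    intro i hi q hq hclose
    have hle : a i ≤ a (i+1) := ha_mono i (i+1) (by omega)
    have hint := hInt (a i) (a (i+1)) (ha_mem i) (ha_mem (i+1))
    have heq : d i - (a (i+1) - a i) * h q = ∫ s in (a i)..(a (i+1)), (h s - h q) := by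
      rw [intervalIntegral.integral_sub hint intervalIntegrable_const,
        intervalIntegral.integral_const, smul_eq_mul]
    rw [heq]
    have hb := intervalIntegral.norm_integral_le_of_norm_le_const (C := ε)
      (f := fun s => h s - h q) (a := a i) (b := a (i+1)) (fun x hx => by
        have hx' := hx
        rw [Set.uIoc_of_le hle] at hx'
        rw [Real.norm_eq_abs]
        exact huc x ⟨le_trans (ha_mem i).1 hx'.1.le, le_trans hx'.2 (ha_mem (i+1)).2⟩
          q hq (hclose x hx))
    rw [Real.norm_eq_abs, abs_of_nonneg (by linarith : (0:ℝ) ≤ a (i+1) - a i)] at hb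
    exact hb
  -- bound on |d (i+1) - d i|
  have hdd : ∀ i, i < M → |d (i+1) - d i| ≤
      ε * (a (i+1) - a i) + ε * (a (i+2) - a (i+1)) +
        Mh * |(a (i+2) - a (i+1)) - (a (i+1) - a i)| := by
    intro i hi
    have hq : a (i+1) ∈ Set.Icc (0:ℝ) t := ha_mem (i+1)
    have hle1 : a i ≤ a (i+1) := ha_mono i (i+1) (by omega)
    have hle2 : a (i+1) ≤ a (i+2) := ha_mono (i+1) (i+2) (by omega)
    have hc1 : |d i - (a (i+1) - a i) * h (a (i+1))| ≤ ε * (a (i+1) - a i) := by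
      apply hclaim i (le_of_lt hi) (a (i+1)) hq
      intro s hs
      rw [Set.uIoc_of_le hle1] at hs
      rw [abs_of_nonpos (by linarith [hs.2] : s - a (i+1) ≤ 0)]
      have := hlen i (le_of_lt hi)
      have := hs.1
      linarith
    have hc2 : |d (i+1) - (a (i+2) - a (i+1)) * h (a (i+1))| ≤ ε * (a (i+2) - a (i+1)) := by
      apply hclaim (i+1) hi (a (i+1)) hq
      intro s hs
      rw [Set.uIoc_of_le hle2] at hs
      rw [abs_of_nonneg (by linarith [hs.1] : 0 ≤ s - a (i+1))]
      have := hlen (i+1) hi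
      have := hs.2
      linarith
    have hhq : |h (a (i+1))| ≤ Mh := hMb _ hq
    have habs : |((a (i+2) - a (i+1)) - (a (i+1) - a i)) * h (a (i+1))| ≤
        Mh * |(a (i+2) - a (i+1)) - (a (i+1) - a i)| := by
      rw [abs_mul, mul_comm]
      exact mul_le_mul_of_nonneg_right hhq (abs_nonneg _)
    have hiden : d (i+1) - d i =
        (d (i+1) - (a (i+2) - a (i+1)) * h (a (i+1)))
        - (d i - (a (i+1) - a i) * h (a (i+1)))
        + ((a (i+2) - a (i+1)) - (a (i+1) - a i)) * h (a (i+1)) := by ring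
    rw [hiden]
    have t1 := abs_add_le ((d (i+1) - (a (i+2) - a (i+1)) * h (a (i+1)))
        - (d i - (a (i+1) - a i) * h (a (i+1))))
      (((a (i+2) - a (i+1)) - (a (i+1) - a i)) * h (a (i+1)))
    have t2 := abs_sub (d (i+1) - (a (i+2) - a (i+1)) * h (a (i+1)))
      (d i - (a (i+1) - a i) * h (a (i+1)))
    linarith
  -- telescoping sums of lengths
  have hsA : ∑ i ∈ Finset.range M, (a (i+1) - a i) ≤ t := by
    rw [Finset.sum_range_sub a M, ha0]
    simpa using (ha_mem M).2
  have hsB : ∑ i ∈ Finset.range M, (a (i+2) - a (i+1)) ≤ t := by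
    have hts : ∑ i ∈ Finset.range M, ((fun k => a (k+1)) (i+1) - (fun k => a (k+1)) i)
        = a (M+1) - a 1 := Finset.sum_range_sub (fun k => a (k+1)) M
    simp only at hts
    rw [hts, haM]
    linarith [(ha_mem 1).1]
  have hsC : ∑ i ∈ Finset.range M, |(a (i+2) - a (i+1)) - (a (i+1) - a i)|
      ≤ 3 * (1/((K:ℝ)+2)) := by
    rcases Nat.eq_zero_or_pos M with hM0 | hM0
    · rw [hM0]
      simp
      positivity
    · have hMM : M = (M-1) + 1 := by omega
      rw [hMM, Finset.sum_range_succ]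
      set M' := M - 1 with hM'
      have hlast : |(a (M'+2) - a (M'+1)) - (a (M'+1) - a M')| ≤ 2 * (1/((K:ℝ)+2)) := by
        have h1 := hlen M' (by omega)
        have h2 := hlen (M'+1) (by omega)
        have h3 := hlen_nonneg M'
        have h4 := hlen_nonneg (M'+1)
        have := abs_sub (a (M'+2) - a (M'+1)) (a (M'+1) - a M')
        rw [abs_of_nonneg h4, abs_of_nonneg h3] at this
        linarith
      have hmono : ∀ i, i < M' → ρ i ≤ ρ (i+1) := by
        intro i _
        apply one_div_le_one_div_of_le (by positivity)
        have : (n - (i+1) : ℕ) ≤ (n - i : ℕ) := by omega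
        have := (Nat.cast_le (α := ℝ)).mpr this
        linarith
      have heach : ∀ i ∈ Finset.range M', |(a (i+2) - a (i+1)) - (a (i+1) - a i)|
          = ρ (i+1) - ρ i := by
        intro i hi'
        have hi2 := Finset.mem_range.mp hi'
        rw [hlen_exact i (by omega), hlen_exact (i+1) (by omega)]
        rw [abs_of_nonneg (by linarith [hmono i hi2])]
      have hmain : ∑ i ∈ Finset.range M', |(a (i+2) - a (i+1)) - (a (i+1) - a i)|
          ≤ 1/((K:ℝ)+2) := by
        rw [Finset.sum_congr rfl heach, Finset.sum_range_sub ρ M']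
        have hρM : ρ M' ≤ 1/((K:ℝ)+2) := by
          apply one_div_le_one_div_of_le hKpos
          have h6 : K + 1 ≤ (n - M' : ℕ) := by omega
          have h7 := (Nat.cast_le (α := ℝ)).mpr h6
          push_cast at h7
          linarith
        linarith [hρ_nonneg 0]
      linarith
  -- the sigma-dependent coefficients
  set e : ℕ → ℝ := fun i => σ (n - i) with he_def
  have he : ∀ i, |e i| ≤ 1 := fun i =>
    abs_le.mpr ⟨by linarith [(hσ (n-i)).1], (hσ (n-i)).2⟩
  -- rewrite the two integrals
  have hA : (∫ s in (0:ℝ)..t, h s * σ (mFun (tSeq n - s) + 1))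
      = ∑ i ∈ Finset.range (M+1), e i * d i := by
    rw [hsum (fun k => σ (k+1))]
    apply Finset.sum_congr rfl
    intro i hi
    have hir := Finset.mem_range.mp hi
    have h1 : n - i - 1 + 1 = n - i := by omega
    show σ (n - i - 1 + 1) * d i = σ (n - i) * d i
    rw [h1]
  have hB : (∫ s in (0:ℝ)..t, h s * σ (mFun (tSeq n - s)))
      = ∑ i ∈ Finset.range (M+1), e (i+1) * d i := by
    rw [hsum σ]
    apply Finset.sum_congr rfl
    intro i hi
    have h1 : n - i - 1 = n - (i+1) := by omega
    show σ (n - i - 1) * d i = σ (n - (i+1)) * d i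
    rw [h1]
  rw [hA, hB, abel_aux M e d]
  -- final numeric assembly
  have habs1 : |∑ i ∈ Finset.range M, e (i+1) * (d (i+1) - d i)|
      ≤ ∑ i ∈ Finset.range M, |d (i+1) - d i| := by
    refine (Finset.abs_sum_le_sum_abs _ _).trans (Finset.sum_le_sum fun i _ => ?_)
    rw [abs_mul]
    have := he (i+1)
    nlinarith [abs_nonneg (d (i+1) - d i), abs_nonneg (e (i+1))]
  have hsum_dd : ∑ i ∈ Finset.range M, |d (i+1) - d i|
      ≤ 2 * ε * t + Mh * (3 * (1/((K:ℝ)+2))) := by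
    calc ∑ i ∈ Finset.range M, |d (i+1) - d i|
        ≤ ∑ i ∈ Finset.range M, (ε * (a (i+1) - a i) + ε * (a (i+2) - a (i+1)) +
            Mh * |(a (i+2) - a (i+1)) - (a (i+1) - a i)|) :=
          Finset.sum_le_sum fun i hi => hdd i (Finset.mem_range.mp hi)
      _ = ε * (∑ i ∈ Finset.range M, (a (i+1) - a i))
          + ε * (∑ i ∈ Finset.range M, (a (i+2) - a (i+1)))
          + Mh * (∑ i ∈ Finset.range M, |(a (i+2) - a (i+1)) - (a (i+1) - a i)|) := by
          rw [Finset.sum_add_distrib, Finset.sum_add_distrib,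
            ← Finset.mul_sum, ← Finset.mul_sum, ← Finset.mul_sum]
      _ ≤ ε * t + ε * t + Mh * (3 * (1/((K:ℝ)+2))) := by
          have g1 := mul_le_mul_of_nonneg_left hsA hε.le
          have g2 := mul_le_mul_of_nonneg_left hsB hε.le
          have g3 := mul_le_mul_of_nonneg_left hsC h0Mh
          linarith
      _ = 2 * ε * t + Mh * (3 * (1/((K:ℝ)+2))) := by ring
  have hd0 : |d 0| ≤ Mh * (1/((K:ℝ)+2)) :=
    (hd_abs 0 (by omega)).trans (mul_le_mul_of_nonneg_left (hlen 0 (by omega)) h0Mh)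
  have hdM : |d M| ≤ Mh * (1/((K:ℝ)+2)) :=
    (hd_abs M le_rfl).trans (mul_le_mul_of_nonneg_left (hlen M le_rfl) h0Mh)
  have he0 : |e 0 * d 0| ≤ |d 0| := by
    rw [abs_mul]
    nlinarith [he 0, abs_nonneg (d 0), abs_nonneg (e 0)]
  have heM : |e (M+1) * d M| ≤ |d M| := by
    rw [abs_mul]
    nlinarith [he (M+1), abs_nonneg (d M), abs_nonneg (e (M+1))]
  have tri1 := abs_add_le ((∑ i ∈ Finset.range M, e (i+1) * (d (i+1) - d i)) + e 0 * d 0)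
    (-(e (M+1) * d M))
  have tri2 := abs_add_le (∑ i ∈ Finset.range M, e (i+1) * (d (i+1) - d i)) (e 0 * d 0)
  rw [abs_neg] at tri1
  have hfin : 5*Mh/((K:ℝ)+2) = Mh * (3 * (1/((K:ℝ)+2))) + Mh * (1/((K:ℝ)+2))
      + Mh * (1/((K:ℝ)+2)) := by ring
  have hgoal : (∑ i ∈ Finset.range M, e (i+1) * (d (i+1) - d i)) + e 0 * d 0
      - e (M+1) * d M
      = ((∑ i ∈ Finset.range M, e (i+1) * (d (i+1) - d i)) + e 0 * d 0)
        + (-(e (M+1) * d M)) := by ring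
  rw [hgoal, hfin]
  linarith

end AuxShift
/-- **(Shift estimate in the proof of Lemma 4.2(f), display (4.40).)** For `t ≥ 0` and `h`
continuous on `[0,t]`, the supremum over all `σ : ℕ₀ → [0,1]` of
`|∫₀ᵗ h(s) σ(m(t_n − s) + 1) ds − ∫₀ᵗ h(s) σ(m(t_n − s)) ds|` tends to `0` as `n → ∞`. -/
theorem shift_estimate (t : ℝ) (ht : 0 ≤ t) (h : ℝ → ℝ)
    (hh : ContinuousOn h (Set.Icc 0 t)) :
    Filter.Tendsto
      (fun n : ℕ =>
        ⨆ σ : {σ : ℕ → ℝ // ∀ k, σ k ∈ Set.Icc (0 : ℝ) 1},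
          |(∫ s in (0:ℝ)..t, h s * σ.1 (mFun (tSeq n - s) + 1)) -
            ∫ s in (0:ℝ)..t, h s * σ.1 (mFun (tSeq n - s))|)
      Filter.atTop (nhds 0) := by
  haveI hne : Nonempty {σ : ℕ → ℝ // ∀ k, σ k ∈ Set.Icc (0 : ℝ) 1} :=
    ⟨⟨fun _ => 0, fun k => ⟨le_refl 0, zero_le_one⟩⟩⟩
  rcases ht.eq_or_lt with rfl | htpos
  · simp only [intervalIntegral.integral_same, sub_zero, abs_zero, ciSup_const]
    exact tendsto_const_nhds
  -- t > 0
  obtain ⟨Mh, hMb⟩ : ∃ Mh, ∀ x ∈ Set.Icc (0:ℝ) t, |h x| ≤ Mh := by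
    obtain ⟨C, hC⟩ := isCompact_Icc.exists_bound_of_continuousOn hh
    exact ⟨C, fun x hx => by simpa [Real.norm_eq_abs] using hC x hx⟩
  have h0Mh : 0 ≤ Mh := le_trans (abs_nonneg _) (hMb 0 ⟨le_refl _, htpos.le⟩)
  have hInt : ∀ u v : ℝ, u ∈ Set.Icc (0:ℝ) t → v ∈ Set.Icc (0:ℝ) t →
      IntervalIntegrable h MeasureTheory.volume u v := by
    intro u v hu hv
    exact (hh.mono (Set.uIcc_subset_Icc hu hv)).intervalIntegrable
  have hKtend : Filter.Tendsto (fun n : ℕ => (mFun (tSeq n - t) : ℝ))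
      Filter.atTop Filter.atTop := by
    apply tendsto_natCast_atTop_atTop.comp
    apply mFun_tendsto_comp
    have := Filter.tendsto_atTop_add_const_right Filter.atTop (-t) tSeq_tendsto
    simpa [sub_eq_add_neg] using this
  rw [Metric.tendsto_atTop]
  intro ε₀ hε₀
  set ε : ℝ := ε₀ / (2 * (2 * t + 1)) with hεdef
  have hε : 0 < ε := by positivity
  have huc0 : UniformContinuousOn h (Set.Icc 0 t) :=
    isCompact_Icc.uniformContinuousOn_of_continuous hh
  obtain ⟨δ, hδ, hucd⟩ := (Metric.uniformContinuousOn_iff).mp huc0 ε hε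
  have huc : ∀ x ∈ Set.Icc (0:ℝ) t, ∀ y ∈ Set.Icc (0:ℝ) t, |x - y| ≤ δ/2 → |h x - h y| ≤ ε := by
    intro x hx y hy hxy
    have := hucd x hx y hy (by rw [Real.dist_eq]; linarith)
    rw [Real.dist_eq] at this
    exact this.le
  -- eventual facts
  have E1 : ∀ᶠ n : ℕ in Filter.atTop, t ≤ tSeq n := tSeq_tendsto.eventually_ge_atTop t
  have E2 : ∀ᶠ n : ℕ in Filter.atTop,
      1/((mFun (tSeq n - t) : ℝ) + 2) ≤ δ/2 := by
    filter_upwards [hKtend.eventually_ge_atTop (2/δ)] with n hn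
    rw [div_le_iff₀ hδ] at hn
    rw [div_le_div_iff₀ (by positivity) (by positivity : (0:ℝ) < 2)]
    nlinarith [hδ]
  have E3 : ∀ᶠ n : ℕ in Filter.atTop,
      5*Mh/((mFun (tSeq n - t) : ℝ) + 2) < ε₀/2 := by
    filter_upwards [hKtend.eventually_ge_atTop (10*Mh/ε₀)] with n hn
    rw [div_lt_iff₀ (by positivity : (0:ℝ) < (mFun (tSeq n - t) : ℝ) + 2)]
    have h1 : 10*Mh/ε₀ * ε₀ = 10*Mh := by field_simp
    nlinarith [hε₀]
  apply Filter.eventually_atTop.mp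
  filter_upwards [E1, E2, E3] with n h1 h2 h3
  rw [Real.dist_eq, sub_zero]
  set F : {σ : ℕ → ℝ // ∀ k, σ k ∈ Set.Icc (0 : ℝ) 1} → ℝ := fun σ =>
    |(∫ s in (0:ℝ)..t, h s * σ.1 (mFun (tSeq n - s) + 1)) -
      ∫ s in (0:ℝ)..t, h s * σ.1 (mFun (tSeq n - s))| with hF
  have hb : ∀ σ, F σ ≤ 2*ε*t + 5*Mh/((mFun (tSeq n - t) : ℝ) + 2) := fun σ =>
    key t htpos h Mh hMb hInt ε (δ/2) hε (by positivity) huc n h1 h2 σ.1 σ.2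
  have hbdd : BddAbove (Set.range F) := by
    refine ⟨2*ε*t + 5*Mh/((mFun (tSeq n - t) : ℝ) + 2), ?_⟩
    rintro x ⟨σ, rfl⟩
    exact hb σ
  have hS : (⨆ σ, F σ) ≤ 2*ε*t + 5*Mh/((mFun (tSeq n - t) : ℝ) + 2) := ciSup_le hb
  have hS0 : 0 ≤ ⨆ σ, F σ :=
    le_trans (abs_nonneg _) (le_ciSup hbdd (Classical.arbitrary _))
  rw [abs_of_nonneg hS0]
  have hεt : 2*ε*t ≤ ε₀/2 := by
    have hkey : ε * (2*(2*t+1)) = ε₀ := by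
      rw [hεdef]; field_simp
    have h5 : ε₀/2 = 2*ε*t + ε := by rw [← hkey]; ring
    linarith [hε]
  linarith


end
end
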